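/- arXiv:1306.1514 — 5 statements merged into one kernel-verified Lean document; each statement's English description precedes it below -/
import Mathlib

section
/- Let N ≥ 1 and let g be an N×N complex matrix with gᵀg = I_N (so g is invertible with g⁻¹ = gᵀ) such that rank(I_N − g) ≤ 2. Then for all vectors x, y, z ∈ ℂ^N the following identity holds in ℂ^N: (z − g·z)·⟨(g − g⁻¹)x, y⟩ + (y − g·y)·⟨(g − g⁻¹)z, x⟩ + (x − g·x)·⟨(g − g⁻¹)y, z⟩ = 0. -/
open Matrix

private lemma aux_anti {N : ℕ} (g : Matrix (Fin N) (Fin N) ℂ) (u w : Fin N → ℂ) :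
    (g - gᵀ).mulVec u ⬝ᵥ w = -((g - gᵀ).mulVec w ⬝ᵥ u) := by
  rw [dotProduct_comm, dotProduct_mulVec, ← mulVec_transpose]
  simp [transpose_sub, sub_mulVec, neg_mulVec, sub_dotProduct, neg_dotProduct]

private lemma aux_self {N : ℕ} (g : Matrix (Fin N) (Fin N) ℂ) (u : Fin N → ℂ) :
    (g - gᵀ).mulVec u ⬝ᵥ u = 0 := by
  have h := aux_anti g u u; linear_combination h / 2

private lemma aux_key {N : ℕ} {g : Matrix (Fin N) (Fin N) ℂ} (hg : gᵀ * g = 1)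
    (x y z : Fin N → ℂ) (a b : ℂ)
    (hz : z - g.mulVec z = a • (x - g.mulVec x) + b • (y - g.mulVec y)) :
    ((g - gᵀ).mulVec x ⬝ᵥ y) • (z - g.mulVec z) +
      ((g - gᵀ).mulVec z ⬝ᵥ x) • (y - g.mulVec y) +
      ((g - gᵀ).mulVec y ⬝ᵥ z) • (x - g.mulVec x) = 0 := by
  set d : Fin N → ℂ := z - a • x - b • y with hd
  have h1 : d - g.mulVec d =
      (z - g.mulVec z) - a • (x - g.mulVec x) - b • (y - g.mulVec y) := by
    simp only [hd, Matrix.mulVec_sub, Matrix.mulVec_smul, smul_sub]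
    abel
  rw [hz] at h1
  have hgd : g.mulVec d = d := by
    have h2 : d - g.mulVec d = 0 := by rw [h1]; abel
    have := sub_eq_zero.mp h2; exact this.symm
  have hgtd : gᵀ.mulVec d = d := by
    conv_lhs => rw [← hgd]
    rw [Matrix.mulVec_mulVec, hg, Matrix.one_mulVec]
  have hMd : (g - gᵀ).mulVec d = 0 := by
    rw [Matrix.sub_mulVec, hgd, hgtd, sub_self]
  have hz2 : z = d + a • x + b • y := by rw [hd]; abel
  have hMz : (g - gᵀ).mulVec z = a • (g - gᵀ).mulVec x + b • (g - gᵀ).mulVec y := by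
    conv_lhs => rw [hz2]
    simp [Matrix.mulVec_add, Matrix.mulVec_smul, hMd]
  have hzx : (g - gᵀ).mulVec z ⬝ᵥ x = -b * ((g - gᵀ).mulVec x ⬝ᵥ y) := by
    rw [hMz, add_dotProduct, smul_dotProduct, smul_dotProduct, aux_self, aux_anti g y x]
    simp only [smul_eq_mul, mul_zero, zero_add, mul_neg]; ring
  have hzy : (g - gᵀ).mulVec z ⬝ᵥ y = a * ((g - gᵀ).mulVec x ⬝ᵥ y) := by
    rw [hMz, add_dotProduct, smul_dotProduct, smul_dotProduct, aux_self]
    simp only [smul_eq_mul, mul_zero, add_zero]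
  have hyz : (g - gᵀ).mulVec y ⬝ᵥ z = -a * ((g - gᵀ).mulVec x ⬝ᵥ y) := by
    rw [aux_anti g y z, hzy]; ring
  rw [hz, hzx, hyz]
  module

/-- For `g ∈ SO_N` (over `ℂ`) with `rank(1 - g) ≤ 2`, the Jacobi-type identity
`(z - g z)⟨(g - g⁻¹)x, y⟩ + (y - g y)⟨(g - g⁻¹)z, x⟩ + (x - g x)⟨(g - g⁻¹)y, z⟩ = 0` holds. -/
theorem stmt_0 (N : ℕ) (hN : 1 ≤ N) (g : Matrix (Fin N) (Fin N) ℂ)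
    (hg : gᵀ * g = 1) (hrank : (1 - g).rank ≤ 2) (x y z : Fin N → ℂ) :
    ((g - g⁻¹).mulVec x ⬝ᵥ y) • (z - g.mulVec z) +
      ((g - g⁻¹).mulVec z ⬝ᵥ x) • (y - g.mulVec y) +
      ((g - g⁻¹).mulVec y ⬝ᵥ z) • (x - g.mulVec x) = 0 := by
  have hginv : g⁻¹ = gᵀ := Matrix.inv_eq_left_inv hg
  rw [hginv]
  have hAw : ∀ w : Fin N → ℂ, (1 - g).mulVec w = w - g.mulVec w := by
    intro w; rw [Matrix.sub_mulVec, Matrix.one_mulVec]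
  -- linear dependence of the three vectors in the range of 1 - g
  have hnli : ¬ LinearIndependent ℂ ![(1 - g).mulVec x, (1 - g).mulVec y, (1 - g).mulVec z] := by
    intro h
    have hle : Submodule.span ℂ
        (Set.range ![(1 - g).mulVec x, (1 - g).mulVec y, (1 - g).mulVec z])
        ≤ LinearMap.range (1 - g).mulVecLin := by
      rw [Submodule.span_le]
      rintro v ⟨i, rfl⟩
      fin_cases i <;> exact ⟨_, rfl⟩
    have h3 := finrank_span_eq_card h
    have h4 := Submodule.finrank_mono hle
    rw [h3] at h4
    simp only [Matrix.rank] at hrank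
    simp at h4
    omega
  obtain ⟨c, hc, i, hi⟩ := Fintype.not_linearIndependent_iff.mp hnli
  have hsum : c 0 • (x - g.mulVec x) + c 1 • (y - g.mulVec y) + c 2 • (z - g.mulVec z) = 0 := by
    have := hc
    simp only [Fin.sum_univ_three] at this
    simpa [hAw] using this
  by_cases h2 : c 2 ≠ 0
  · refine aux_key hg x y z (-(c 2)⁻¹ * c 0) (-(c 2)⁻¹ * c 1) ?_
    have h5 : (c 2)⁻¹ • (c 0 • (x - g.mulVec x) + c 1 • (y - g.mulVec y)
        + c 2 • (z - g.mulVec z)) = 0 := by rw [hsum, smul_zero]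
    have h6 : (c 2)⁻¹ * c 2 = 1 := inv_mul_cancel₀ h2
    rw [smul_add, smul_add, smul_smul, smul_smul, smul_smul, h6, one_smul] at h5
    linear_combination (norm := module) h5
  push_neg at h2
  by_cases h1 : c 1 ≠ 0
  · have hkey := aux_key hg x z y (-(c 1)⁻¹ * c 0) 0 ?_
    · rw [aux_anti g x y, aux_anti g z x, aux_anti g y z]
      linear_combination (norm := module) -hkey
    · have h5 : (c 1)⁻¹ • (c 0 • (x - g.mulVec x) + c 1 • (y - g.mulVec y)
          + c 2 • (z - g.mulVec z)) = 0 := by rw [hsum, smul_zero]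
      have h6 : (c 1)⁻¹ * c 1 = 1 := inv_mul_cancel₀ h1
      rw [h2, smul_add, smul_add, smul_smul, smul_smul, smul_smul, h6, one_smul] at h5
      linear_combination (norm := module) h5
  push_neg at h1
  have h0 : c 0 ≠ 0 := by
    rcases i with ⟨iv, hiv⟩
    interval_cases iv <;> simp_all
  have hkey := aux_key hg z y x 0 0 ?_
  · rw [aux_anti g x y, aux_anti g z x, aux_anti g y z]
    linear_combination (norm := module) -hkey
  · have h5 : (c 0)⁻¹ • (c 0 • (x - g.mulVec x) + c 1 • (y - g.mulVec y)
        + c 2 • (z - g.mulVec z)) = 0 := by rw [hsum, smul_zero]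
    have h6 : (c 0)⁻¹ * c 0 = 1 := inv_mul_cancel₀ h0
    rw [h1, h2, smul_add, smul_add, smul_smul, smul_smul, smul_smul, h6, one_smul] at h5
    linear_combination (norm := module) h5
end

section
/- Let K be a field, N ≥ 4, and let A be an N×N skew-symmetric matrix over K (Aᵀ = −A, with zero diagonal) with rank(A) ≤ 2. Then for all indices 1 ≤ i < j < k < l ≤ N one has A_{ij}A_{kl} − A_{ik}A_{jl} + A_{il}A_{jk} = 0, i.e. every 4×4 principal sub-Pfaffian of A vanishes. -/
open Matrix

theorem aux_det_fin_four {R : Type*} [CommRing R] (M : Matrix (Fin 4) (Fin 4) R) :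
    M.det =
      M 0 0 * M 1 1 * M 2 2 * M 3 3 - M 0 0 * M 1 1 * M 2 3 * M 3 2 -
        M 0 0 * M 1 2 * M 2 1 * M 3 3 + M 0 0 * M 1 2 * M 2 3 * M 3 1 +
        M 0 0 * M 1 3 * M 2 1 * M 3 2 - M 0 0 * M 1 3 * M 2 2 * M 3 1 -
        M 0 1 * M 1 0 * M 2 2 * M 3 3 + M 0 1 * M 1 0 * M 2 3 * M 3 2 +
        M 0 1 * M 1 2 * M 2 0 * M 3 3 - M 0 1 * M 1 2 * M 2 3 * M 3 0 -
        M 0 1 * M 1 3 * M 2 0 * M 3 2 + M 0 1 * M 1 3 * M 2 2 * M 3 0 +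
        M 0 2 * M 1 0 * M 2 1 * M 3 3 - M 0 2 * M 1 0 * M 2 3 * M 3 1 -
        M 0 2 * M 1 1 * M 2 0 * M 3 3 + M 0 2 * M 1 1 * M 2 3 * M 3 0 +
        M 0 2 * M 1 3 * M 2 0 * M 3 1 - M 0 2 * M 1 3 * M 2 1 * M 3 0 -
        M 0 3 * M 1 0 * M 2 1 * M 3 2 + M 0 3 * M 1 0 * M 2 2 * M 3 1 +
        M 0 3 * M 1 1 * M 2 0 * M 3 2 - M 0 3 * M 1 1 * M 2 2 * M 3 0 -
        M 0 3 * M 1 2 * M 2 0 * M 3 1 + M 0 3 * M 1 2 * M 2 1 * M 3 0 := by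
  simp [Matrix.det_succ_row_zero, Fin.sum_univ_succ, Fin.succAbove, Fin.ext_iff]
  ring

/-- Every `4 × 4` principal sub-Pfaffian of a skew-symmetric matrix of rank at most `2`
vanishes. -/
theorem stmt_2 (K : Type) [Field K] (N : ℕ) (hN : 4 ≤ N)
    (A : Matrix (Fin N) (Fin N) K) (hA : Aᵀ = -A) (hdiag : ∀ i, A i i = 0)
    (hrank : A.rank ≤ 2) (i j k l : Fin N) (hij : i < j) (hjk : j < k) (hkl : k < l) :
    A i j * A k l - A i k * A j l + A i l * A j k = 0 := by
  have hskew : ∀ a b : Fin N, A b a = - A a b := fun a b => congrFun (congrFun hA a) b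
  by_contra hp
  set f : Fin 4 → Fin N := ![i, j, k, l] with hf
  set B : Matrix (Fin 4) (Fin 4) K := A.submatrix f f with hB
  have hdet : B.det = (A i j * A k l - A i k * A j l + A i l * A j k) ^ 2 := by
    rw [aux_det_fin_four]
    simp only [hB, hf, Matrix.submatrix_apply, Matrix.cons_val_zero, Matrix.cons_val_one,
      Matrix.head_cons, Matrix.cons_val_two, Matrix.tail_cons, Matrix.cons_val_three,
      Matrix.head_fin_const]
    rw [hskew i j, hskew i k, hskew i l, hskew j k, hskew j l, hskew k l,
      hdiag i, hdiag j, hdiag k, hdiag l]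
    ring
  have hdetne : B.det ≠ 0 := by rw [hdet]; exact pow_ne_zero _ hp
  have hunit : IsUnit B := by
    rw [Matrix.isUnit_iff_isUnit_det]
    exact isUnit_iff_ne_zero.mpr hdetne
  -- the columns of B are linearly independent
  have hcols : LinearIndependent K fun b : Fin 4 => fun a : Fin 4 => B a b :=
    Matrix.linearIndependent_cols_iff_isUnit.mpr hunit
  -- hence the corresponding columns of A are linearly independent
  set v : Fin 4 → (Fin N → K) := fun b => fun r : Fin N => A r (f b) with hv
  have hvind : LinearIndependent K v := LinearIndependent.of_comp (LinearMap.funLeft K K f) hcols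
  -- each column lies in the range of mulVecLin A
  have hmem : ∀ b : Fin 4, v b ∈ LinearMap.range A.mulVecLin := by
    intro b
    refine ⟨Pi.single (f b) 1, ?_⟩
    ext r
    simp [Matrix.mulVecLin_apply, Matrix.mulVec_single, hv]
  have hle : Submodule.span K (Set.range v) ≤ LinearMap.range A.mulVecLin := by
    rw [Submodule.span_le]
    rintro x ⟨b, rfl⟩
    exact hmem b
  have hcard := linearIndependent_iff_card_eq_finrank_span.mp hvind
  have h4 : (4 : ℕ) ≤ A.rank := by
    have hm : Module.finrank K (Submodule.span K (Set.range v)) ≤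
        Module.finrank K (LinearMap.range A.mulVecLin) := Submodule.finrank_mono hle
    have : (4 : ℕ) = Module.finrank K (Submodule.span K (Set.range v)) := hcard
    rw [Matrix.rank]
    omega
  omega
end

section
/- Let R be a commutative ring, n ≥ 0, let A be a (2n+1)×(2n+1) skew-symmetric matrix over R (Aᵀ = −A with zero diagonal), and let v ∈ R^{2n+1} be a column vector. Define p_j(A) ∈ R by det(I + tA) = Σ_{j=0}^{2n+1} p_j(A)t^j, and set b_{2n}(A) := Σ_{j=0}^{2n} (−1)^j p_j(A) A^{2n−j}. Then vᵀ · b_{2n}(A) · v = det M, where M is the (2n+2)×(2n+2) skew-symmetric matrix with top-left (2n+1)×(2n+1) block A, last column equal to v extended by 0, and last row equal to −vᵀ extended by 0. -/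
open Matrix Polynomial

section Aux

variable {S : Type} [CommRing S]

lemma neg_one_sq_pow (t : ℕ) : ((-1 : S) ^ t) * ((-1 : S) ^ t) = 1 := by
  rw [← pow_add]
  exact Even.neg_one_pow ⟨t, rfl⟩

/-- Step A: `A * b_{2n}(A) = det A • 1` via Cayley–Hamilton. -/
lemma mulB_eq_det_smul_one (n : ℕ) [Nontrivial S]
    (A : Matrix (Fin (2 * n + 1)) (Fin (2 * n + 1)) S) :
    A * (∑ j ∈ Finset.range (2 * n + 1),
        ((-1 : S) ^ j *
          ((1 + (Polynomial.X : Polynomial S) •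
              A.map Polynomial.C).det.coeff j)) • A ^ (2 * n - j))
      = A.det • 1 := by
  set g := (-A).charpoly with hgdef
  have hdeg : g.natDegree = 2 * n + 1 := by
    rw [hgdef, Matrix.charpoly_natDegree_eq_dim, Fintype.card_fin]
  have hrev : (1 + (Polynomial.X : Polynomial S) • A.map Polynomial.C).det = g.reverse := by
    rw [hgdef, Matrix.reverse_charpoly, Matrix.charpolyRev]
    congr 1
    ext i j
    simp [Matrix.add_apply, Matrix.sub_apply, Matrix.smul_apply, Matrix.map_apply,
      mul_neg, sub_neg_eq_add]
  have hcoeff : ∀ j, j ≤ 2 * n + 1 →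
      (1 + (Polynomial.X : Polynomial S) • A.map Polynomial.C).det.coeff j
        = g.coeff (2 * n + 1 - j) := by
    intro j hj
    rw [hrev, Polynomial.coeff_reverse, hdeg, Polynomial.revAt_le hj]
  have hCH : ∑ i ∈ Finset.range (2 * n + 1 + 1), g.coeff i • (-A) ^ i = 0 := by
    have h := Matrix.aeval_self_charpoly (-A)
    rw [Polynomial.aeval_eq_sum_range, hdeg] at h
    exact h
  have hCH' : ∑ i ∈ Finset.range (2 * n + 1), g.coeff (i + 1) • (-A) ^ (i + 1)
      = -(g.coeff 0 • 1) := by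
    rw [Finset.sum_range_succ', pow_zero] at hCH
    linear_combination (norm := module) hCH
  have hc0 : g.coeff 0 = A.det := by
    have h1 : (-A).det = (-1 : S) ^ (2 * n + 1) * g.coeff 0 := by
      have := Matrix.det_eq_sign_charpoly_coeff (-A)
      rwa [Fintype.card_fin] at this
    have h2 : (-A).det = (-1 : S) ^ (2 * n + 1) * A.det := by
      rw [Matrix.det_neg, Fintype.card_fin]
    have h3 : (-1 : S) ^ (2 * n + 1) * g.coeff 0 = (-1 : S) ^ (2 * n + 1) * A.det :=
      h1 ▸ h2 ▸ rfl
    calc g.coeff 0 = ((-1 : S) ^ (2 * n + 1) * (-1 : S) ^ (2 * n + 1)) * g.coeff 0 := by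
          rw [neg_one_sq_pow, one_mul]
      _ = (-1 : S) ^ (2 * n + 1) * ((-1 : S) ^ (2 * n + 1) * g.coeff 0) := by ring
      _ = (-1 : S) ^ (2 * n + 1) * ((-1 : S) ^ (2 * n + 1) * A.det) := by rw [h3]
      _ = A.det := by rw [← mul_assoc, neg_one_sq_pow, one_mul]
  calc A * (∑ j ∈ Finset.range (2 * n + 1),
        ((-1 : S) ^ j *
          ((1 + (Polynomial.X : Polynomial S) •
              A.map Polynomial.C).det.coeff j)) • A ^ (2 * n - j))
      = ∑ j ∈ Finset.range (2 * n + 1),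
          ((-1 : S) ^ j *
            ((1 + (Polynomial.X : Polynomial S) •
                A.map Polynomial.C).det.coeff j)) • (A * A ^ (2 * n - j)) := by
        rw [Finset.mul_sum]
        exact Finset.sum_congr rfl fun j _ => (Matrix.mul_smul _ _ _)
    _ = ∑ j ∈ Finset.range (2 * n + 1),
          -(g.coeff (2 * n + 1 - j) • (-A) ^ (2 * n + 1 - j)) := by
        apply Finset.sum_congr rfl
        intro j hj
        have hj' : j ≤ 2 * n := by
          have := Finset.mem_range.mp hj; omega
        rw [hcoeff j (by omega)]
        have he : A * A ^ (2 * n - j) = A ^ (2 * n + 1 - j) := by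
          rw [← pow_succ']
          congr 1
          omega
        rw [he]
        have hneg : (-A) ^ (2 * n + 1 - j)
            = (-1 : S) ^ (2 * n + 1 - j) • A ^ (2 * n + 1 - j) := by
          rw [← neg_one_smul S A, _root_.smul_pow]
        have hs : (-1 : S) ^ (2 * n + 1 - j) = -(-1 : S) ^ j := by
          have h1 : (-1 : S) ^ (2 * n + 1 - j) * (-1 : S) ^ j = -1 := by
            rw [← pow_add, show 2 * n + 1 - j + j = 2 * n + 1 by omega]
            exact Odd.neg_one_pow ⟨n, by ring⟩
          calc (-1 : S) ^ (2 * n + 1 - j)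
              = ((-1 : S) ^ (2 * n + 1 - j) * (-1 : S) ^ j) * (-1 : S) ^ j := by
                rw [mul_assoc, neg_one_sq_pow, mul_one]
            _ = -(-1 : S) ^ j := by rw [h1]; ring
        rw [hneg, hs, smul_smul, ← neg_smul]
        congr 1
        ring
    _ = -∑ j ∈ Finset.range (2 * n + 1),
          g.coeff (2 * n + 1 - j) • (-A) ^ (2 * n + 1 - j) := by
        rw [Finset.sum_neg_distrib]
    _ = -∑ j ∈ Finset.range (2 * n + 1), g.coeff (j + 1) • (-A) ^ (j + 1) := by
        congr 1
        rw [← Finset.sum_range_reflect (fun i => g.coeff (i + 1) • (-A) ^ (i + 1)) (2 * n + 1)]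
        apply Finset.sum_congr rfl
        intro j hj
        have hj' : j < 2 * n + 1 := Finset.mem_range.mp hj
        have he : 2 * n + 1 - 1 - j + 1 = 2 * n + 1 - j := by omega
        simp only [he]
    _ = A.det • 1 := by rw [hCH', hc0, neg_neg]

/-- Step B: `b_{2n}(A) = adjugate A`, by specialization from the generic matrix. -/
lemma sumB_eq_adjugate (n : ℕ) (A : Matrix (Fin (2 * n + 1)) (Fin (2 * n + 1)) S) :
    (∑ j ∈ Finset.range (2 * n + 1),
        ((-1 : S) ^ j *
          ((1 + (Polynomial.X : Polynomial S) •
              A.map Polynomial.C).det.coeff j)) • A ^ (2 * n - j))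
      = adjugate A := by
  let ι := Fin (2 * n + 1)
  let S₀ := MvPolynomial (ι × ι) ℤ
  let A' : Matrix ι ι S₀ := mvPolynomialX ι ι ℤ
  let φ : S₀ →ₐ[ℤ] S := MvPolynomial.aeval fun p : ι × ι => A p.1 p.2
  -- the generic case
  have hgen : (∑ j ∈ Finset.range (2 * n + 1),
        ((-1 : S₀) ^ j *
          ((1 + (Polynomial.X : Polynomial S₀) •
              A'.map Polynomial.C).det.coeff j)) • A' ^ (2 * n - j))
      = adjugate A' := by
    have hreg : IsSMulRegular S₀ A'.det := fun x y =>
      mul_left_cancel₀ (Matrix.det_mvPolynomialX_ne_zero ι ℤ)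
    apply hreg.matrix
    have hmul := mulB_eq_det_smul_one (S := S₀) n A'
    calc A'.det • (∑ j ∈ Finset.range (2 * n + 1),
          ((-1 : S₀) ^ j *
            ((1 + (Polynomial.X : Polynomial S₀) •
                A'.map Polynomial.C).det.coeff j)) • A' ^ (2 * n - j))
        = adjugate A' * (A' * (∑ j ∈ Finset.range (2 * n + 1),
            ((-1 : S₀) ^ j *
              ((1 + (Polynomial.X : Polynomial S₀) •
                  A'.map Polynomial.C).det.coeff j)) • A' ^ (2 * n - j))) := by
          rw [← Matrix.mul_assoc, Matrix.adjugate_mul, Matrix.smul_mul, Matrix.one_mul]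
      _ = adjugate A' * (A'.det • 1) := by rw [hmul]
      _ = A'.det • adjugate A' := by
          rw [Matrix.mul_smul, Matrix.mul_one]
  -- specialize
  have hA : φ.mapMatrix A' = A := mvPolynomialX_mapMatrix_aeval ℤ A
  have hcoeffmap : ∀ j,
      φ ((1 + (Polynomial.X : Polynomial S₀) • A'.map Polynomial.C).det.coeff j)
        = (1 + (Polynomial.X : Polynomial S) • A.map Polynomial.C).det.coeff j := by
    intro j
    have hψ : Polynomial.map (φ : S₀ →+* S)
          ((1 + (Polynomial.X : Polynomial S₀) • A'.map Polynomial.C).det)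
        = (1 + (Polynomial.X : Polynomial S) • A.map Polynomial.C).det := by
      rw [← Polynomial.coe_mapRingHom, RingHom.map_det]
      congr 1
      ext i k
      by_cases h : i = k <;>
        simp [h, Matrix.add_apply, Matrix.smul_apply, Matrix.map_apply, Matrix.one_apply,
          ← hA, AlgHom.mapMatrix_apply]
    rw [← hψ, Polynomial.coeff_map]
    rfl
  calc (∑ j ∈ Finset.range (2 * n + 1),
        ((-1 : S) ^ j *
          ((1 + (Polynomial.X : Polynomial S) •
              A.map Polynomial.C).det.coeff j)) • A ^ (2 * n - j))
      = φ.mapMatrix (∑ j ∈ Finset.range (2 * n + 1),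
          ((-1 : S₀) ^ j *
            ((1 + (Polynomial.X : Polynomial S₀) •
                A'.map Polynomial.C).det.coeff j)) • A' ^ (2 * n - j)) := by
        rw [map_sum]
        apply Finset.sum_congr rfl
        intro j _
        symm
        rw [AlgHom.mapMatrix_apply,
          Matrix.map_smul' (⇑φ) _ _ (fun a b => map_mul φ a b)]
        have hpow : (A' ^ (2 * n - j)).map ⇑φ = A ^ (2 * n - j) := by
          rw [← AlgHom.mapMatrix_apply, map_pow, hA]
        rw [hpow, _root_.map_mul, hcoeffmap j, map_pow, map_neg, _root_.map_one]
    _ = adjugate A := by rw [hgen, AlgHom.map_adjugate, hA]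

/-- The determinant of the bordered matrix equals `v ⬝ᵥ adjugate A *ᵥ v`. -/
lemma det_border (k : ℕ) (A : Matrix (Fin (k + 1)) (Fin (k + 1)) S)
    (v : Fin (k + 1) → S) :
    (Matrix.of fun i j : Fin (k + 2) =>
        if hi : (i : ℕ) < k + 1 then
          if hj : (j : ℕ) < k + 1 then A ⟨i, hi⟩ ⟨j, hj⟩ else v ⟨i, hi⟩
        else
          if hj : (j : ℕ) < k + 1 then -v ⟨j, hj⟩ else 0).det
      = v ⬝ᵥ (adjugate A).mulVec v := by
  set M : Matrix (Fin (k + 2)) (Fin (k + 2)) S :=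
    Matrix.of fun i j : Fin (k + 2) =>
      if hi : (i : ℕ) < k + 1 then
        if hj : (j : ℕ) < k + 1 then A ⟨i, hi⟩ ⟨j, hj⟩ else v ⟨i, hi⟩
      else
        if hj : (j : ℕ) < k + 1 then -v ⟨j, hj⟩ else 0 with hM
  have hAA : ∀ i j : Fin (k + 1), M i.castSucc j.castSucc = A i j := by
    intro i j
    simp [hM, Matrix.of_apply, i.is_lt, j.is_lt, i.is_le, j.is_le]
  have hv : ∀ i : Fin (k + 1), M i.castSucc (Fin.last (k + 1)) = v i := by
    intro i
    simp [hM, Matrix.of_apply, i.is_lt, Fin.val_last, i.is_le, not_lt.mpr i.is_le]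
  have hnv : ∀ j : Fin (k + 1), M (Fin.last (k + 1)) j.castSucc = -v j := by
    intro j
    simp [hM, Matrix.of_apply, j.is_lt, Fin.val_last, j.is_le, not_lt.mpr j.is_le]
  have h00 : M (Fin.last (k + 1)) (Fin.last (k + 1)) = 0 := by
    simp [hM, Matrix.of_apply, Fin.val_last]
  have hsign : ∀ (a b : ℕ) (x y z : S),
      (-1 : S) ^ (k + 1 + b) * (-x) * ((-1) ^ (a + k) * y * ((-1) ^ (a + b) * z))
        = x * (z * y) := by
    intro a b x y z
    have h : (-1 : S) ^ (k + 1 + b) * ((-1) ^ (a + k) * (-1) ^ (a + b)) = -1 := by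
      rw [← pow_add, ← pow_add,
        show k + 1 + b + (a + k + (a + b)) = 2 * (k + a + b) + 1 by ring,
        pow_succ, pow_mul, neg_one_sq, one_pow, one_mul]
    calc (-1 : S) ^ (k + 1 + b) * (-x) * ((-1) ^ (a + k) * y * ((-1) ^ (a + b) * z))
        = ((-1 : S) ^ (k + 1 + b) * ((-1) ^ (a + k) * (-1) ^ (a + b))) * (-(x * y * z)) := by
          ring
      _ = x * (z * y) := by rw [h]; ring
  have hdetB : ∀ j' : Fin (k + 1),
      (M.submatrix Fin.castSucc (Fin.succAbove j'.castSucc)).det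
        = ∑ i : Fin (k + 1),
            (-1 : S) ^ ((i : ℕ) + k) * v i *
              ((-1) ^ ((i : ℕ) + (j' : ℕ)) * adjugate A j' i) := by
    intro j'
    rw [Matrix.det_succ_column _ (Fin.last k)]
    apply Finset.sum_congr rfl
    intro i _
    have hne : j'.castSucc ≠ Fin.last (k + 1) := (Fin.castSucc_lt_last j').ne
    have hentry : (M.submatrix Fin.castSucc (Fin.succAbove j'.castSucc)) i (Fin.last k)
        = v i := by
      rw [Matrix.submatrix_apply, Fin.succAbove_ne_last_last hne, hv]
    have hsub : ((M.submatrix Fin.castSucc (Fin.succAbove j'.castSucc)).submatrix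
          i.succAbove (Fin.last k).succAbove)
        = A.submatrix i.succAbove j'.succAbove := by
      ext a b
      simp only [Matrix.submatrix_apply, Fin.succAbove_last,
        Fin.castSucc_succAbove_castSucc, hAA]
    rw [hentry, hsub]
    have hadj : (A.submatrix i.succAbove j'.succAbove).det
        = (-1 : S) ^ ((i : ℕ) + (j' : ℕ)) * adjugate A j' i := by
      rw [Matrix.adjugate_fin_succ_eq_det_submatrix, ← mul_assoc, neg_one_sq_pow, one_mul]
    rw [hadj]
    simp [Fin.val_last]
  rw [Matrix.det_succ_row M (Fin.last (k + 1)), Fin.sum_univ_castSucc, h00]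
  simp only [Fin.succAbove_last, mul_zero, zero_mul, add_zero]
  have hdot : v ⬝ᵥ (adjugate A).mulVec v
      = ∑ j' : Fin (k + 1), v j' * ∑ i : Fin (k + 1), adjugate A j' i * v i := by
    simp [Matrix.mulVec, dotProduct]
  rw [hdot]
  apply Finset.sum_congr rfl
  intro j' _
  rw [hnv, hdetB, Finset.mul_sum, Finset.mul_sum]
  apply Finset.sum_congr rfl
  intro i _
  simp only [Fin.val_last, Fin.coe_castSucc]
  exact hsign (i : ℕ) (j' : ℕ) (v j') (v i) (adjugate A j' i)

end Aux

/-- For a `(2n+1) × (2n+1)` skew-symmetric matrix `A` and a vector `v`,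
`vᵀ b_{2n}(A) v = det M`, where `b_{2n}(A) = Σ_{j=0}^{2n} (−1)^j p_j(A) A^{2n−j}`
(with `det(1 + tA) = Σ p_j(A) t^j`) and `M` is the bordered `(2n+2) × (2n+2)`
skew-symmetric matrix with blocks `A`, `v`, `−vᵀ`, `0`. -/
theorem stmt_9 (n : ℕ) (R : Type) [CommRing R]
    (A : Matrix (Fin (2 * n + 1)) (Fin (2 * n + 1)) R)
    (hA : Aᵀ = -A) (hdiag : ∀ i, A i i = 0) (v : Fin (2 * n + 1) → R) :
    v ⬝ᵥ (∑ j ∈ Finset.range (2 * n + 1),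
        ((-1 : R) ^ j *
          ((1 + (Polynomial.X : Polynomial R) •
              A.map Polynomial.C).det.coeff j)) • A ^ (2 * n - j)).mulVec v
      = (Matrix.of fun i j : Fin (2 * n + 2) =>
          if hi : (i : ℕ) < 2 * n + 1 then
            if hj : (j : ℕ) < 2 * n + 1 then A ⟨i, hi⟩ ⟨j, hj⟩ else v ⟨i, hi⟩
          else
            if hj : (j : ℕ) < 2 * n + 1 then -v ⟨j, hj⟩ else 0).det := by
  rw [sumB_eq_adjugate, det_border]
end

section
/- Let N ≥ 3 and m ≥ 1, and set M := N + 2m + 1. Let J′ be the M×M symmetric matrix with J′_{ij} = δ_{ij} for 1 ≤ i, j ≤ N, J′_{N+k, N+l} = δ_{k+l, 2m+2} for 1 ≤ k, l ≤ 2m+1, and all other entries zero. Let e_m := Σ_{j=1}^{m} E_{N+j, N+j+1} − Σ_{j=1}^{m} E_{N+m+j, N+m+j+1} ∈ M_M(ℂ), where E_{a,b} is the matrix unit. Then e_m lies in the Lie algebra so(J′) := {X ∈ M_M(ℂ) : XᵀJ′ + J′X = 0}, and the centralizer z := {X ∈ so(J′) : X e_m = e_m X} is a ℂ-vector space of dimension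 N(N−1)/2 + N + m. -/
open Matrix

/-- The symmetric bilinear form `J′` on `ℂ^{N+2m+1}`: identity on the first `N`
coordinates, anti-diagonal (`J′_{N+k,N+l} = δ_{k+l,2m+2}`) on the last `2m+1`. -/
noncomputable def Jform (N m : ℕ) :
    Matrix (Fin (N + 2 * m + 1)) (Fin (N + 2 * m + 1)) ℂ :=
  Matrix.of fun i j =>
    if (i : ℕ) < N ∧ (j : ℕ) < N then (if i = j then 1 else 0)
    else if N ≤ (i : ℕ) ∧ N ≤ (j : ℕ) then
      (if ((i : ℕ) - N) + ((j : ℕ) - N) = 2 * m then 1 else 0)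
    else 0

/-- The nilpotent element `e_m = Σ_{j=1}^m E_{N+j,N+j+1} − Σ_{j=1}^m E_{N+m+j,N+m+j+1}`
(of Jordan type `(1^N, 2m+1)`). -/
noncomputable def nilpE (N m : ℕ) :
    Matrix (Fin (N + 2 * m + 1)) (Fin (N + 2 * m + 1)) ℂ :=
  (∑ j : Fin m, Matrix.single
      (⟨N + (j : ℕ), by omega⟩ : Fin (N + 2 * m + 1))
      (⟨N + (j : ℕ) + 1, by omega⟩ : Fin (N + 2 * m + 1)) (1 : ℂ))
  - ∑ j : Fin m, Matrix.single
      (⟨N + m + (j : ℕ), by omega⟩ : Fin (N + 2 * m + 1))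
      (⟨N + m + (j : ℕ) + 1, by omega⟩ : Fin (N + 2 * m + 1)) (1 : ℂ)

/-- The linear condition `X ∈ so(J′)`, i.e. `Xᵀ J′ + J′ X = 0`, as a linear map. -/
noncomputable def soCond (M : ℕ) (J : Matrix (Fin M) (Fin M) ℂ) :
    Matrix (Fin M) (Fin M) ℂ →ₗ[ℂ] Matrix (Fin M) (Fin M) ℂ where
  toFun X := Xᵀ * J + J * X
  map_add' X Y := by
    simp only [Matrix.transpose_add, Matrix.add_mul, Matrix.mul_add]
    abel
  map_smul' c X := by
    simp [Matrix.transpose_smul, Matrix.smul_mul, Matrix.mul_smul, smul_add]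

/-- The linear condition `X e = e X`, i.e. `X e − e X = 0`, as a linear map. -/
noncomputable def commCond (M : ℕ) (e : Matrix (Fin M) (Fin M) ℂ) :
    Matrix (Fin M) (Fin M) ℂ →ₗ[ℂ] Matrix (Fin M) (Fin M) ℂ where
  toFun X := X * e - e * X
  map_add' X Y := by
    simp only [Matrix.add_mul, Matrix.mul_add]
    abel
  map_smul' c X := by
    simp [Matrix.smul_mul, Matrix.mul_smul, smul_sub]

namespace Stmt11Aux

variable (N m : ℕ)

/-- The involution on indices determined by `J`. -/
def tauv (a : ℕ) : ℕ := if a < N then a else 2*N + 2*m - a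

lemma tauv_lt {a : ℕ} (ha : a < N + 2*m + 1) : tauv N m a < N + 2*m + 1 := by
  unfold tauv; split <;> omega

lemma tauv_tauv {a : ℕ} (ha : a < N + 2*m + 1) : tauv N m (tauv N m a) = a := by
  simp only [tauv]; split_ifs <;> omega

/-- The sign function for `nilpE`. -/
noncomputable def sval (a : ℕ) : ℂ := if a < N + m then 1 else -1

lemma sval_mul_self (a : ℕ) : sval N m a * sval N m a = 1 := by
  unfold sval; split <;> norm_num

lemma Jform_apply (a b : Fin (N + 2*m + 1)) :
    Jform N m a b = if (b : ℕ) = tauv N m a then 1 else 0 := by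
  unfold Jform tauv
  simp only [of_apply, Fin.ext_iff]
  have ha := a.isLt; have hb := b.isLt
  split_ifs <;> first | rfl | omega

lemma sum_std_apply (K : ℕ) (hK : K + m ≤ N + 2*m) (a b : Fin (N + 2*m + 1)) :
    (∑ j : Fin m, Matrix.single
      (⟨K + (j : ℕ), by omega⟩ : Fin (N + 2*m + 1))
      (⟨K + (j : ℕ) + 1, by omega⟩ : Fin (N + 2*m + 1)) (1 : ℂ)) a b =
    if K ≤ (a : ℕ) ∧ (a : ℕ) < K + m ∧ (b : ℕ) = (a : ℕ) + 1 then 1 else 0 := by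
  simp only [Matrix.sum_apply]
  split_ifs with h
  · rw [Finset.sum_eq_single (⟨(a : ℕ) - K, by omega⟩ : Fin m)]
    · have h1 : (⟨K + ((a : ℕ) - K), by omega⟩ : Fin (N + 2*m + 1)) = a := Fin.ext (by simp; omega)
      have h2 : (⟨K + ((a : ℕ) - K) + 1, by omega⟩ : Fin (N + 2*m + 1)) = b := Fin.ext (by simp; omega)
      rw [h1, h2, Matrix.single_apply_same]
    · intro j _ hj
      apply Matrix.single_apply_of_ne
      rintro ⟨h1, -⟩
      apply hj
      have := congrArg Fin.val h1
      simp only [Fin.ext_iff] at *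
      omega
    · simp
  · apply Finset.sum_eq_zero
    intro j _
    apply Matrix.single_apply_of_ne
    rintro ⟨h1, h2⟩
    have e1 := congrArg Fin.val h1
    have e2 := congrArg Fin.val h2
    simp only at e1 e2
    omega

lemma nilpE_apply (a b : Fin (N + 2*m + 1)) :
    nilpE N m a b =
      if N ≤ (a : ℕ) ∧ (a : ℕ) < N + 2*m ∧ (b : ℕ) = (a : ℕ) + 1 then sval N m a
      else 0 := by
  have hb := b.isLt
  rw [nilpE, Matrix.sub_apply, sum_std_apply N m N (by omega),
    show (∑ j : Fin m, Matrix.single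
      (⟨N + m + (j : ℕ), by omega⟩ : Fin (N + 2*m + 1))
      (⟨N + m + (j : ℕ) + 1, by omega⟩ : Fin (N + 2*m + 1)) (1 : ℂ)) a b =
      if N + m ≤ (a : ℕ) ∧ (a : ℕ) < N + m + m ∧ (b : ℕ) = (a : ℕ) + 1 then 1 else 0
      from sum_std_apply N m (N + m) (by omega) a b]
  unfold sval
  split_ifs <;> first | omega | norm_num


lemma mul_J (X : Matrix (Fin (N + 2*m + 1)) (Fin (N + 2*m + 1)) ℂ)
    (i j : Fin (N + 2*m + 1)) :
    (X * Jform N m) i j = X i ⟨tauv N m j, tauv_lt N m j.isLt⟩ := by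
  rw [Matrix.mul_apply, Finset.sum_eq_single (⟨tauv N m j, tauv_lt N m j.isLt⟩ :
      Fin (N + 2*m + 1))]
  · rw [Jform_apply]
    simp only [tauv_tauv N m j.isLt]
    simp
  · intro k _ hk
    rw [Jform_apply, if_neg, mul_zero]
    intro h
    apply hk
    apply Fin.ext
    have := tauv_tauv N m k.isLt
    simp only [h, this]
  · intro h; exact absurd (Finset.mem_univ _) h


lemma J_mul (X : Matrix (Fin (N + 2*m + 1)) (Fin (N + 2*m + 1)) ℂ)
    (i j : Fin (N + 2*m + 1)) :
    (Jform N m * X) i j = X ⟨tauv N m i, tauv_lt N m i.isLt⟩ j := by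
  rw [Matrix.mul_apply, Finset.sum_eq_single (⟨tauv N m i, tauv_lt N m i.isLt⟩ :
      Fin (N + 2*m + 1))]
  · rw [Jform_apply]
    simp
  · intro k _ hk
    rw [Jform_apply, if_neg, zero_mul]
    intro h
    apply hk
    apply Fin.ext
    simp only [h]
  · intro h; exact absurd (Finset.mem_univ _) h

lemma tr_J (X : Matrix (Fin (N + 2*m + 1)) (Fin (N + 2*m + 1)) ℂ)
    (i j : Fin (N + 2*m + 1)) :
    (Xᵀ * Jform N m) i j = X ⟨tauv N m j, tauv_lt N m j.isLt⟩ i := by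
  rw [mul_J, Matrix.transpose_apply]

lemma mul_e (X : Matrix (Fin (N + 2*m + 1)) (Fin (N + 2*m + 1)) ℂ)
    (i j : Fin (N + 2*m + 1)) :
    (X * nilpE N m) i j =
      if N + 1 ≤ (j : ℕ) then
        sval N m ((j : ℕ) - 1) * X i ⟨(j : ℕ) - 1, by omega⟩
      else 0 := by
  rw [Matrix.mul_apply]
  split_ifs with h
  · have hj := j.isLt
    rw [Finset.sum_eq_single (⟨(j : ℕ) - 1, by omega⟩ : Fin (N + 2*m + 1))]
    · rw [nilpE_apply, if_pos (by simp; omega), mul_comm]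
    · intro k _ hk
      rw [nilpE_apply, if_neg, mul_zero]
      rintro ⟨-, -, hc⟩
      exact hk (Fin.ext (by simp; omega))
    · intro h; exact absurd (Finset.mem_univ _) h
  · apply Finset.sum_eq_zero
    intro k _
    rw [nilpE_apply, if_neg, mul_zero]
    rintro ⟨h1, -, hc⟩
    omega

lemma e_mul (X : Matrix (Fin (N + 2*m + 1)) (Fin (N + 2*m + 1)) ℂ)
    (i j : Fin (N + 2*m + 1)) :
    (nilpE N m * X) i j =
      if h : N ≤ (i : ℕ) ∧ (i : ℕ) < N + 2*m then
        sval N m i * X ⟨(i : ℕ) + 1, by omega⟩ j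
      else 0 := by
  rw [Matrix.mul_apply]
  split_ifs with h
  · rw [Finset.sum_eq_single (⟨(i : ℕ) + 1, by omega⟩ : Fin (N + 2*m + 1))]
    · rw [nilpE_apply, if_pos (by simp; omega)]
    · intro k _ hk
      rw [nilpE_apply, if_neg, zero_mul]
      rintro ⟨-, -, hc⟩
      exact hk (Fin.ext (by simp; omega))
    · intro h; exact absurd (Finset.mem_univ _) h
  · apply Finset.sum_eq_zero
    intro k _
    rw [nilpE_apply, if_neg, zero_mul]
    rintro ⟨h1, h2, hc⟩
    omega


lemma eJ : (nilpE N m)ᵀ * Jform N m = -(Jform N m * nilpE N m) := by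
  ext i j
  rw [tr_J, Matrix.neg_apply, J_mul]
  rw [nilpE_apply, nilpE_apply]
  have hi := i.isLt; have hj := j.isLt
  simp only [tauv, sval]
  split_ifs <;> first | omega | norm_num

lemma pow_so (k : ℕ) :
    ((nilpE N m) ^ k)ᵀ * Jform N m = ((-1 : ℂ) ^ k) • (Jform N m * (nilpE N m) ^ k) := by
  induction k with
  | zero => simp
  | succ k ih =>
    have : ((nilpE N m) ^ (k+1))ᵀ = (nilpE N m)ᵀ * ((nilpE N m) ^ k)ᵀ := by
      rw [pow_succ, Matrix.transpose_mul]
    rw [this, Matrix.mul_assoc, ih, Matrix.mul_smul, ← Matrix.mul_assoc, eJ]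
    simp only [Matrix.neg_mul, Matrix.mul_assoc, ← pow_succ]
    rw [smul_neg, pow_succ]
    rw [mul_comm ((-1:ℂ)^k) (-1), neg_one_mul, neg_smul]
    rw [pow_succ']

lemma nilpE_pow_apply : ∀ (k : ℕ), 1 ≤ k → ∀ (i j : Fin (N + 2*m + 1)),
    ((nilpE N m) ^ k) i j =
      if N ≤ (i : ℕ) ∧ (j : ℕ) = (i : ℕ) + k then
        (-1 : ℂ) ^ ((j : ℕ) - N - max ((i : ℕ) - N) m)
      else 0 := by
  intro k
  induction k with
  | zero => intro h; omega
  | succ k ih =>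
    intro _ i j
    have hi := i.isLt; have hj := j.isLt
    rcases Nat.eq_zero_or_pos k with hk0 | hk'
    · subst hk0
      rw [pow_one, nilpE_apply]
      simp only [sval]
      split_ifs <;>
        first
          | rfl
          | omega
          | (rw [show (j:ℕ) - N - max ((i:ℕ) - N) m = 0 from by omega]; norm_num)
          | (rw [show (j:ℕ) - N - max ((i:ℕ) - N) m = 1 from by omega]; norm_num)
    · rw [pow_succ', e_mul]
      by_cases hC : N ≤ (i:ℕ) ∧ (j:ℕ) = (i:ℕ) + (k+1)
      · have hilt : (i:ℕ) < N + 2*m := by omega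
        rw [dif_pos ⟨hC.1, hilt⟩, ih hk', if_pos (by simp; omega), if_pos hC]
        show sval N m ↑i * (-1 : ℂ) ^ ((j:ℕ) - N - max (((i:ℕ) + 1) - N) m) = _
        simp only [sval]
        split_ifs with hs
        · rw [show (j:ℕ) - N - max (((i:ℕ)+1) - N) m
              = (j:ℕ) - N - max ((i:ℕ) - N) m from by omega]
          ring
        · rw [show (j:ℕ) - N - max ((i:ℕ) - N) m
              = ((j:ℕ) - N - max (((i:ℕ)+1) - N) m) + 1 from by omega, pow_succ]
          ring
      · rw [if_neg hC]
        by_cases hD : N ≤ (i:ℕ) ∧ (i:ℕ) < N + 2*m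
        · rw [dif_pos hD, ih hk', if_neg (by simp; omega), mul_zero]
        · rw [dif_neg hD]


/-- Generator of the `so_N` part. -/
noncomputable def gA (i j : Fin N) : Matrix (Fin (N + 2*m + 1)) (Fin (N + 2*m + 1)) ℂ :=
  Matrix.single (⟨i, by omega⟩ : Fin (N + 2*m + 1)) ⟨j, by omega⟩ 1
    - Matrix.single (⟨j, by omega⟩ : Fin (N + 2*m + 1)) ⟨i, by omega⟩ 1

/-- Generator of the `V_N` part. -/
noncomputable def gB (i : Fin N) : Matrix (Fin (N + 2*m + 1)) (Fin (N + 2*m + 1)) ℂ :=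
  Matrix.single (⟨i, by omega⟩ : Fin (N + 2*m + 1)) ⟨N + 2*m, by omega⟩ 1
    - Matrix.single (⟨N, by omega⟩ : Fin (N + 2*m + 1)) ⟨i, by omega⟩ 1

/-- Generator of the `ℂ^m` part. -/
noncomputable def gD (t : Fin m) : Matrix (Fin (N + 2*m + 1)) (Fin (N + 2*m + 1)) ℂ :=
  (nilpE N m) ^ (2 * (t : ℕ) + 1)

lemma gA_apply (i j : Fin N) (a b : Fin (N + 2*m + 1)) :
    gA N m i j a b = (if (i:ℕ) = a ∧ (j:ℕ) = b then 1 else 0)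
      - (if (j:ℕ) = a ∧ (i:ℕ) = b then 1 else 0) := by
  simp only [gA, Matrix.sub_apply, Matrix.single, Matrix.of_apply, Fin.ext_iff]

lemma gB_apply (i : Fin N) (a b : Fin (N + 2*m + 1)) :
    gB N m i a b = (if (i:ℕ) = a ∧ N + 2*m = (b:ℕ) then 1 else 0)
      - (if N = (a:ℕ) ∧ (i:ℕ) = b then 1 else 0) := by
  simp only [gB, Matrix.sub_apply, Matrix.single, Matrix.of_apply, Fin.ext_iff]

lemma gA_so (i j : Fin N) :
    (gA N m i j)ᵀ * Jform N m + Jform N m * gA N m i j = 0 := by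
  ext a b
  have ha := a.isLt; have hb := b.isLt; have hi := i.isLt; have hj := j.isLt
  simp only [Matrix.add_apply, Matrix.zero_apply, tr_J, J_mul, gA_apply]
  simp only [tauv]
  split_ifs <;> first | omega | norm_num

lemma gB_so (i : Fin N) :
    (gB N m i)ᵀ * Jform N m + Jform N m * gB N m i = 0 := by
  ext a b
  have ha := a.isLt; have hb := b.isLt; have hi := i.isLt
  simp only [Matrix.add_apply, Matrix.zero_apply, tr_J, J_mul, gB_apply]
  simp only [tauv]
  split_ifs <;> first | omega | norm_num

lemma gD_so (t : Fin m) :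
    (gD N m t)ᵀ * Jform N m + Jform N m * gD N m t = 0 := by
  rw [gD, pow_so, Odd.neg_one_pow ⟨(t:ℕ), by ring⟩, neg_smul, one_smul, neg_add_cancel]

lemma gA_comm (i j : Fin N) :
    gA N m i j * nilpE N m - nilpE N m * gA N m i j = 0 := by
  ext a b
  have ha := a.isLt; have hb := b.isLt; have hi := i.isLt; have hj := j.isLt
  simp only [Matrix.sub_apply, Matrix.zero_apply, mul_e, e_mul, gA_apply]
  split_ifs <;> first | omega | norm_num

lemma gB_comm (i : Fin N) :
    gB N m i * nilpE N m - nilpE N m * gB N m i = 0 := by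
  ext a b
  have ha := a.isLt; have hb := b.isLt; have hi := i.isLt
  simp only [Matrix.sub_apply, Matrix.zero_apply, mul_e, e_mul, gB_apply]
  split_ifs <;> first | omega | norm_num

lemma gD_comm (t : Fin m) :
    gD N m t * nilpE N m - nilpE N m * gD N m t = 0 := by
  rw [gD, ← pow_succ, ← pow_succ', sub_self]


/-- Index type for the free coordinates. -/
abbrev IdxA := {q : Fin N × Fin N // q.1 < q.2}

abbrev Idx := IdxA N ⊕ (Fin N ⊕ Fin m)

/-- Parameterization of the centralizer. -/
noncomputable def psi (c : Idx N m → ℂ) : Matrix (Fin (N + 2*m + 1)) (Fin (N + 2*m + 1)) ℂ :=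
  (∑ q : IdxA N, c (.inl q) • gA N m q.1.1 q.1.2)
  + (∑ i : Fin N, c (.inr (.inl i)) • gB N m i)
  + (∑ t : Fin m, c (.inr (.inr t)) • gD N m t)

/-- Extraction of the free coordinates. -/
noncomputable def phi (X : Matrix (Fin (N + 2*m + 1)) (Fin (N + 2*m + 1)) ℂ) :
    Idx N m → ℂ := fun p =>
  match p with
  | .inl q => X ⟨q.1.1, by omega⟩ ⟨q.1.2, by omega⟩
  | .inr (.inl i) => X ⟨i, by omega⟩ ⟨N + 2*m, by omega⟩
  | .inr (.inr t) => (-1 : ℂ) ^ (2 * (t:ℕ) + 1 - m) * X ⟨N, by omega⟩ ⟨N + (2 * (t:ℕ) + 1), by omega⟩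

lemma sumA_apply (f : IdxA N → ℂ) (a b : Fin (N + 2*m + 1)) :
    (∑ q : IdxA N, f q * gA N m q.1.1 q.1.2 a b)
      = (if h : (a:ℕ) < (b:ℕ) ∧ (b:ℕ) < N then
            f ⟨(⟨a, by omega⟩, ⟨b, h.2⟩), h.1⟩ else 0)
        - (if h : (b:ℕ) < (a:ℕ) ∧ (a:ℕ) < N then
            f ⟨(⟨b, by omega⟩, ⟨a, h.2⟩), h.1⟩ else 0) := by
  by_cases h1 : (a:ℕ) < (b:ℕ) ∧ (b:ℕ) < N
  · rw [dif_pos h1, dif_neg (by omega), sub_zero]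
    refine (Finset.sum_eq_single (⟨(⟨a, by omega⟩, ⟨b, h1.2⟩), h1.1⟩ : IdxA N) ?_ ?_).trans ?_
    · rintro ⟨⟨x, y⟩, hxy⟩ _ hq
      have hxy' : (x:ℕ) < (y:ℕ) := hxy
      have hq' : ¬((x:ℕ) = (a:ℕ) ∧ (y:ℕ) = (b:ℕ)) := by
        rintro ⟨u, v⟩
        exact hq (Subtype.ext (Prod.ext (Fin.ext u) (Fin.ext v)))
      rw [gA_apply, if_neg (by rintro ⟨h3, h4⟩; simp only at h3 h4; omega),
        if_neg (by rintro ⟨h3, h4⟩; simp only at h3 h4; omega), sub_zero, mul_zero]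
    · intro h; exact absurd (Finset.mem_univ _) h
    · rw [gA_apply, if_pos (by constructor <;> rfl),
        if_neg (by rintro ⟨h3, h4⟩; simp only at h3 h4; omega)]
      ring
  · by_cases h2 : (b:ℕ) < (a:ℕ) ∧ (a:ℕ) < N
    · rw [dif_neg h1, dif_pos h2, zero_sub]
      refine (Finset.sum_eq_single (⟨(⟨b, by omega⟩, ⟨a, h2.2⟩), h2.1⟩ : IdxA N) ?_ ?_).trans ?_
      · rintro ⟨⟨x, y⟩, hxy⟩ _ hq
        have hxy' : (x:ℕ) < (y:ℕ) := hxy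
        have hq' : ¬((x:ℕ) = (b:ℕ) ∧ (y:ℕ) = (a:ℕ)) := by
          rintro ⟨u, v⟩
          exact hq (Subtype.ext (Prod.ext (Fin.ext u) (Fin.ext v)))
        rw [gA_apply, if_neg (by rintro ⟨h3, h4⟩; simp only at h3 h4; omega),
          if_neg (by rintro ⟨h3, h4⟩; simp only at h3 h4; omega), sub_zero, mul_zero]
      · intro h; exact absurd (Finset.mem_univ _) h
      · rw [gA_apply, if_neg (by rintro ⟨h3, h4⟩; simp only at h3 h4; omega),
          if_pos (by constructor <;> rfl)]
        ring
    · rw [dif_neg h1, dif_neg h2, sub_zero]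
      apply Finset.sum_eq_zero
      rintro ⟨⟨x, y⟩, hxy⟩ _
      have hxy' : (x:ℕ) < (y:ℕ) := hxy
      have hy := y.isLt
      rw [gA_apply, if_neg (by rintro ⟨h3, h4⟩; simp only at h3 h4; omega),
        if_neg (by rintro ⟨h3, h4⟩; simp only at h3 h4; omega), sub_zero, mul_zero]

lemma sumB_apply (f : Fin N → ℂ) (a b : Fin (N + 2*m + 1)) :
    (∑ i : Fin N, f i * gB N m i a b)
      = (if h : (a:ℕ) < N ∧ (b:ℕ) = N + 2*m then f ⟨a, h.1⟩ else 0)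
        - (if h : (a:ℕ) = N ∧ (b:ℕ) < N then f ⟨b, h.2⟩ else 0) := by
  by_cases h1 : (a:ℕ) < N ∧ (b:ℕ) = N + 2*m
  · rw [dif_pos h1, dif_neg (by omega), sub_zero]
    refine (Finset.sum_eq_single (⟨(a:ℕ), h1.1⟩ : Fin N) ?_ ?_).trans ?_
    · intro x _ hx
      have hx' : (x:ℕ) ≠ (a:ℕ) := fun hh => hx (Fin.ext hh)
      have hxl := x.isLt
      rw [gB_apply, if_neg (by rintro ⟨h3, h4⟩; omega),
        if_neg (by rintro ⟨h3, h4⟩; omega), sub_zero, mul_zero]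
    · intro h; exact absurd (Finset.mem_univ _) h
    · rw [gB_apply, if_pos ⟨rfl, h1.2.symm⟩, if_neg (by rintro ⟨h3, -⟩; omega)]
      ring
  · by_cases h2 : (a:ℕ) = N ∧ (b:ℕ) < N
    · rw [dif_neg h1, dif_pos h2, zero_sub]
      refine (Finset.sum_eq_single (⟨(b:ℕ), h2.2⟩ : Fin N) ?_ ?_).trans ?_
      · intro x _ hx
        have hx' : (x:ℕ) ≠ (b:ℕ) := fun hh => hx (Fin.ext hh)
        have hxl := x.isLt
        rw [gB_apply, if_neg (by rintro ⟨h3, h4⟩; omega),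
          if_neg (by rintro ⟨h3, h4⟩; omega), sub_zero, mul_zero]
      · intro h; exact absurd (Finset.mem_univ _) h
      · rw [gB_apply, if_neg (by rintro ⟨h3, h4⟩; omega), if_pos ⟨h2.1.symm, rfl⟩]
        ring
    · rw [dif_neg h1, dif_neg h2, sub_zero]
      apply Finset.sum_eq_zero
      intro x _
      have hxl := x.isLt
      rw [gB_apply, if_neg (by rintro ⟨h3, h4⟩; omega),
        if_neg (by rintro ⟨h3, h4⟩; omega), sub_zero, mul_zero]

lemma sumD_apply (f : Fin m → ℂ) (a b : Fin (N + 2*m + 1)) :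
    (∑ t : Fin m, f t * gD N m t a b)
      = (if h : N ≤ (a:ℕ) ∧ (a:ℕ) < (b:ℕ) ∧ ((b:ℕ) - (a:ℕ)) % 2 = 1 then
          (-1 : ℂ) ^ ((b:ℕ) - N - max ((a:ℕ) - N) m)
            * f ⟨((b:ℕ) - (a:ℕ) - 1) / 2, by have := b.isLt; omega⟩
        else 0) := by
  have hb := b.isLt
  by_cases h1 : N ≤ (a:ℕ) ∧ (a:ℕ) < (b:ℕ) ∧ ((b:ℕ) - (a:ℕ)) % 2 = 1
  · rw [dif_pos h1]
    refine (Finset.sum_eq_single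
      (⟨((b:ℕ) - (a:ℕ) - 1) / 2, by omega⟩ : Fin m) ?_ ?_).trans ?_
    · intro t _ ht
      have ht' : (t:ℕ) ≠ ((b:ℕ) - (a:ℕ) - 1) / 2 := fun hh => ht (Fin.ext hh)
      rw [gD, nilpE_pow_apply N m _ (by omega), if_neg, mul_zero]
      rintro ⟨-, h4⟩
      omega
    · intro h; exact absurd (Finset.mem_univ _) h
    · rw [gD, nilpE_pow_apply N m _ (by omega), if_pos ⟨h1.1, by simp; omega⟩]
      ring
  · rw [dif_neg h1]
    apply Finset.sum_eq_zero
    intro t _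
    rw [gD, nilpE_pow_apply N m _ (by omega), if_neg, mul_zero]
    rintro ⟨h3, h4⟩
    omega

lemma psi_apply (c : Idx N m → ℂ) (a b : Fin (N + 2*m + 1)) :
    psi N m c a b
      = ((if h : (a:ℕ) < (b:ℕ) ∧ (b:ℕ) < N then
            c (.inl ⟨(⟨a, by omega⟩, ⟨b, h.2⟩), h.1⟩) else 0)
        - (if h : (b:ℕ) < (a:ℕ) ∧ (a:ℕ) < N then
            c (.inl ⟨(⟨b, by omega⟩, ⟨a, h.2⟩), h.1⟩) else 0))
        + ((if h : (a:ℕ) < N ∧ (b:ℕ) = N + 2*m then c (.inr (.inl ⟨a, h.1⟩)) else 0)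
        - (if h : (a:ℕ) = N ∧ (b:ℕ) < N then c (.inr (.inl ⟨b, h.2⟩)) else 0))
        + (if h : N ≤ (a:ℕ) ∧ (a:ℕ) < (b:ℕ) ∧ ((b:ℕ) - (a:ℕ)) % 2 = 1 then
          (-1 : ℂ) ^ ((b:ℕ) - N - max ((a:ℕ) - N) m)
            * c (.inr (.inr ⟨((b:ℕ) - (a:ℕ) - 1) / 2, by have := b.isLt; omega⟩))
        else 0) := by
  rw [psi]
  simp only [Matrix.add_apply, Matrix.sum_apply, Matrix.smul_apply, smul_eq_mul]
  rw [sumA_apply, sumB_apply, sumD_apply]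


lemma neg_one_pow_congr {a b : ℕ} (h : a % 2 = b % 2) : ((-1 : ℂ)) ^ a = (-1) ^ b := by
  rcases Nat.even_or_odd a with ha | ha
  · rw [ha.neg_one_pow, (Nat.even_iff.mpr (by have := Nat.even_iff.mp ha; omega)).neg_one_pow]
  · rw [ha.neg_one_pow, (Nat.odd_iff.mpr (by have := Nat.odd_iff.mp ha; omega)).neg_one_pow]

section Derive

variable {N m : ℕ} {X : Matrix (Fin (N + 2*m + 1)) (Fin (N + 2*m + 1)) ℂ}

lemma ptS (hso : Xᵀ * Jform N m + Jform N m * X = 0) (i j : Fin (N + 2*m + 1)) :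
    X ⟨tauv N m j, tauv_lt N m j.isLt⟩ i + X ⟨tauv N m i, tauv_lt N m i.isLt⟩ j = 0 := by
  have := congrFun (congrFun hso i) j
  rwa [Matrix.add_apply, tr_J, J_mul, Matrix.zero_apply] at this

lemma ptC (hcm : X * nilpE N m - nilpE N m * X = 0) (i j : Fin (N + 2*m + 1)) :
    (if N + 1 ≤ (j:ℕ) then sval N m ((j:ℕ) - 1) * X i ⟨(j:ℕ) - 1, by have := j.isLt; omega⟩
      else 0)
    = (if h : N ≤ (i:ℕ) ∧ (i:ℕ) < N + 2*m then
        sval N m i * X ⟨(i:ℕ) + 1, by omega⟩ j else 0) := by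
  have := congrFun (congrFun hcm i) j
  rw [Matrix.sub_apply, mul_e, e_mul, Matrix.zero_apply, sub_eq_zero] at this
  exact this

lemma sval_cancel {a : ℕ} {x y : ℂ} (h : sval N m a * x = y) : x = sval N m a * y := by
  rw [← h, ← mul_assoc, sval_mul_self, one_mul]

lemma sval_zero {a : ℕ} {x : ℂ} (h : sval N m a * x = 0) : x = 0 := by
  have := sval_cancel (N := N) (m := m) h
  rwa [mul_zero] at this

/-- B-block interior entries vanish. -/
lemma F1 (hcm : X * nilpE N m - nilpE N m * X = 0) (i j : Fin (N + 2*m + 1))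
    (hi : (i:ℕ) < N) (hj1 : N ≤ (j:ℕ)) (hj2 : (j:ℕ) < N + 2*m) : X i j = 0 := by
  have h := ptC hcm i ⟨(j:ℕ) + 1, by omega⟩
  rw [if_pos (by simp; omega), dif_neg (by simp; omega)] at h
  have h0 : X i ⟨(j:ℕ) + 1 - 1, by omega⟩ = 0 := sval_zero h
  convert h0 using 3
  all_goals omega

/-- Skew-symmetry with respect to `J`. -/
lemma F2 (hso : Xᵀ * Jform N m + Jform N m * X = 0) (i j : Fin (N + 2*m + 1)) :
    X i j = -X ⟨tauv N m j, tauv_lt N m j.isLt⟩ ⟨tauv N m i, tauv_lt N m i.isLt⟩ := by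
  have h := ptS hso j (⟨tauv N m i, tauv_lt N m i.isLt⟩ : Fin (N + 2*m + 1))
  have e1 : (⟨tauv N m (⟨tauv N m i, tauv_lt N m i.isLt⟩ : Fin (N + 2*m + 1)),
      tauv_lt N m (tauv_lt N m i.isLt)⟩ : Fin (N + 2*m + 1)) = i :=
    Fin.ext (tauv_tauv N m i.isLt)
  rw [e1] at h
  linear_combination h

/-- The D-block entries, as a total function. -/
noncomputable def dfun (N m : ℕ) (X : Matrix (Fin (N + 2*m + 1)) (Fin (N + 2*m + 1)) ℂ)
    (p q : ℕ) : ℂ :=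
  if h : p ≤ 2*m ∧ q ≤ 2*m then X ⟨N + p, by omega⟩ ⟨N + q, by omega⟩ else 0

lemma R1 (hcm : X * nilpE N m - nilpE N m * X = 0) (p q : ℕ)
    (hp : p < 2*m) (hq1 : 1 ≤ q) (hq2 : q ≤ 2*m) :
    dfun N m X (p+1) q = sval N m (N+p) * (sval N m (N+q-1) * dfun N m X p (q-1)) := by
  have h := ptC hcm (⟨N + p, by omega⟩ : Fin (N + 2*m + 1)) (⟨N + q, by omega⟩ : Fin (N + 2*m + 1))
  rw [if_pos (by simp; omega), dif_pos (by simp; omega)] at h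
  rw [dfun, dif_pos (by omega), dfun, dif_pos (by omega)]
  have h2 : sval N m (N + q - 1) * X ⟨N + p, by omega⟩ ⟨N + (q-1), by omega⟩
      = sval N m (N + p) * X ⟨N + p + 1, by omega⟩ ⟨N + q, by omega⟩ := by
    convert h using 3
    all_goals first | rfl | omega | (simp <;> omega) | exact Fin.ext (by simp <;> omega)
  have h3 := (sval_cancel h2.symm)
  convert h3 using 3
  all_goals first | rfl | omega | (simp <;> omega) | exact Fin.ext (by simp <;> omega)

lemma R2 (hcm : X * nilpE N m - nilpE N m * X = 0) (q : ℕ) (hq : q < 2*m) :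
    dfun N m X (2*m) q = 0 := by
  have h := ptC hcm (⟨N + 2*m, by omega⟩ : Fin (N + 2*m + 1))
    (⟨N + q + 1, by omega⟩ : Fin (N + 2*m + 1))
  rw [if_pos (by simp), dif_neg (by simp)] at h
  have h0 : X (⟨N + 2*m, by omega⟩ : Fin (N + 2*m + 1)) ⟨N + q + 1 - 1, by omega⟩ = 0 :=
    sval_zero h
  rw [dfun, dif_pos (by omega)]
  convert h0 using 3
  all_goals first | rfl | omega | (simp <;> omega) | exact Fin.ext (by simp <;> omega)

lemma R3 (hcm : X * nilpE N m - nilpE N m * X = 0) (p : ℕ) (hp1 : 1 ≤ p) (hp2 : p ≤ 2*m) :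
    dfun N m X p 0 = 0 := by
  have h := ptC hcm (⟨N + (p-1), by omega⟩ : Fin (N + 2*m + 1)) (⟨N, by omega⟩ : Fin (N + 2*m + 1))
  rw [if_neg (by simp), dif_pos (by simp; omega)] at h
  have h0 : X (⟨N + (p-1) + 1, by omega⟩ : Fin (N + 2*m + 1)) ⟨N, by omega⟩ = 0 :=
    sval_zero h.symm
  rw [dfun, dif_pos (by omega)]
  convert h0 using 3
  all_goals first | rfl | omega | (simp <;> omega) | exact Fin.ext (by simp <;> omega)

lemma RS (hso : Xᵀ * Jform N m + Jform N m * X = 0) (p q : ℕ) (hp : p ≤ 2*m) (hq : q ≤ 2*m) :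
    dfun N m X p q = -dfun N m X (2*m - q) (2*m - p) := by
  have h := F2 hso (⟨N + p, by omega⟩ : Fin (N + 2*m + 1)) (⟨N + q, by omega⟩ : Fin (N + 2*m + 1))
  rw [dfun, dif_pos (by omega), dfun, dif_pos (by omega)]
  rw [h]
  congr 2 <;> exact Fin.ext (by simp [tauv]; omega)

/-- Below-diagonal D-entries vanish. -/
lemma Dlow (hcm : X * nilpE N m - nilpE N m * X = 0) :
    ∀ q p : ℕ, q < p → p ≤ 2*m → dfun N m X p q = 0 := by
  intro q
  induction q with
  | zero =>
    intro p hp1 hp2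
    exact R3 hcm p (by omega) hp2
  | succ q ih =>
    intro p hp1 hp2
    obtain ⟨p', rfl⟩ : ∃ p', p = p' + 1 := ⟨p - 1, by omega⟩
    rw [R1 hcm p' (q+1) (by omega) (by omega) (by omega)]
    rw [show q + 1 - 1 = q from rfl, ih p' (by omega) (by omega), mul_zero, mul_zero]

/-- The sign factor in the chase along the diagonal. -/
noncomputable def eps2 (m p k : ℕ) : ℂ :=
  (-1 : ℂ) ^ ((p - min p m) + ((p + k) - max k m))

lemma Dchase (hcm : X * nilpE N m - nilpE N m * X = 0) :
    ∀ p k : ℕ, p + k ≤ 2*m → dfun N m X p (p + k) = eps2 m p k * dfun N m X 0 k := by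
  intro p
  induction p with
  | zero =>
    intro k hk
    rw [eps2, show (0 - min 0 m) + ((0 + k) - max k m) = 0 from by omega, pow_zero, one_mul,
      zero_add]
  | succ p ih =>
    intro k hk
    have hsgn : (sval N m (N+p) * sval N m (N+(p+1+k)-1)) * eps2 m p k = eps2 m (p+1) k := by
      rw [eps2, eps2, sval, sval]
      split_ifs with u1 u2 u2
      · rw [one_mul, one_mul]
        exact neg_one_pow_congr (by omega)
      · rw [one_mul, ← pow_succ']
        exact neg_one_pow_congr (by omega)
      · exact absurd u2 (by omega)
      · rw [neg_mul_neg, one_mul, one_mul]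
        exact neg_one_pow_congr (by omega)
    rw [R1 hcm p (p + 1 + k) (by omega) (by omega) (by omega)]
    rw [show p + 1 + k - 1 = p + k from by omega, ih k (by omega), ← hsgn]
    ring

/-- Even-difference D-entries vanish. -/
lemma Deven (hso : Xᵀ * Jform N m + Jform N m * X = 0)
    (hcm : X * nilpE N m - nilpE N m * X = 0)
    (u : ℕ) (hu : 2*u ≤ 2*m) : dfun N m X 0 (2*u) = 0 := by
  have h1 := RS hso 0 (2*u) (by omega) (by omega)
  have h2 := Dchase hcm (2*m - 2*u) (2*u) (by omega)
  rw [show (2*m - 2*u) + 2*u = 2*m from by omega] at h2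
  rw [show 2*m - 0 = 2*m from by omega, h2] at h1
  have h3 : eps2 m (2*m - 2*u) (2*u) = 1 := by
    rw [eps2]
    exact Even.neg_one_pow (Nat.even_iff.mpr (by omega))
  rw [h3, one_mul] at h1
  have h4 : dfun N m X 0 (2*u) + dfun N m X 0 (2*u) = 0 := by linear_combination h1
  exact add_self_eq_zero.mp h4

/-- Classification: D-entries off the odd superdiagonals vanish. -/
lemma Dzero (hso : Xᵀ * Jform N m + Jform N m * X = 0)
    (hcm : X * nilpE N m - nilpE N m * X = 0)
    (p q : ℕ) (hp : p ≤ 2*m) (hq : q ≤ 2*m) (h : ¬(p < q ∧ (q - p) % 2 = 1)) :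
    dfun N m X p q = 0 := by
  rcases lt_or_ge q p with hlt | hle
  · exact Dlow hcm q p hlt hp
  · have heven : (q - p) % 2 = 0 := by omega
    have := Dchase hcm p (q - p) (by omega)
    rw [show p + (q - p) = q from by omega] at this
    have h0 : dfun N m X 0 (q - p) = 0 := by
      have := Deven hso hcm ((q - p)/2) (by omega)
      rwa [show 2 * ((q - p)/2) = q - p from by omega] at this
    rw [this, h0, mul_zero]

lemma psi_phi (hso : Xᵀ * Jform N m + Jform N m * X = 0)
    (hcm : X * nilpE N m - nilpE N m * X = 0) :
    psi N m (phi N m X) = X := by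
  ext a b
  rw [psi_apply]
  have ha := a.isLt; have hb := b.isLt
  by_cases haN : (a:ℕ) < N
  · by_cases hbN : (b:ℕ) < N
    · -- A block
      rcases lt_trichotomy (a:ℕ) (b:ℕ) with h | h | h
      · rw [dif_pos ⟨h, hbN⟩, dif_neg (show ¬((b:ℕ) < (a:ℕ) ∧ (a:ℕ) < N) from by omega),
          dif_neg (show ¬((a:ℕ) < N ∧ (b:ℕ) = N + 2*m) from by omega),
          dif_neg (show ¬((a:ℕ) = N ∧ (b:ℕ) < N) from by omega),
          dif_neg (show ¬(N ≤ (a:ℕ) ∧ (a:ℕ) < (b:ℕ) ∧ ((b:ℕ) - (a:ℕ)) % 2 = 1) from by omega)]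
        simp only [phi, sub_zero, add_zero, zero_sub, neg_zero, zero_add]
      · rw [dif_neg (show ¬((a:ℕ) < (b:ℕ) ∧ (b:ℕ) < N) from by omega),
          dif_neg (show ¬((b:ℕ) < (a:ℕ) ∧ (a:ℕ) < N) from by omega),
          dif_neg (show ¬((a:ℕ) < N ∧ (b:ℕ) = N + 2*m) from by omega),
          dif_neg (show ¬((a:ℕ) = N ∧ (b:ℕ) < N) from by omega),
          dif_neg (show ¬(N ≤ (a:ℕ) ∧ (a:ℕ) < (b:ℕ) ∧ ((b:ℕ) - (a:ℕ)) % 2 = 1) from by omega)]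
        have hS := ptS hso a b
        have e1 : (⟨tauv N m b, tauv_lt N m b.isLt⟩ : Fin (N + 2*m + 1)) = b :=
          Fin.ext (by simp [tauv, hbN])
        have e2 : (⟨tauv N m a, tauv_lt N m a.isLt⟩ : Fin (N + 2*m + 1)) = a :=
          Fin.ext (by simp [tauv, haN])
        rw [e1, e2] at hS
        have hba : b = a := Fin.ext h.symm
        subst hba
        linear_combination -hS/2
      · rw [dif_neg (show ¬((a:ℕ) < (b:ℕ) ∧ (b:ℕ) < N) from by omega),
          dif_pos ⟨h, haN⟩,
          dif_neg (show ¬((a:ℕ) < N ∧ (b:ℕ) = N + 2*m) from by omega),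
          dif_neg (show ¬((a:ℕ) = N ∧ (b:ℕ) < N) from by omega),
          dif_neg (show ¬(N ≤ (a:ℕ) ∧ (a:ℕ) < (b:ℕ) ∧ ((b:ℕ) - (a:ℕ)) % 2 = 1) from by omega)]
        have hS := ptS hso a b
        have e1 : (⟨tauv N m b, tauv_lt N m b.isLt⟩ : Fin (N + 2*m + 1)) = b :=
          Fin.ext (by simp [tauv, hbN])
        have e2 : (⟨tauv N m a, tauv_lt N m a.isLt⟩ : Fin (N + 2*m + 1)) = a :=
          Fin.ext (by simp [tauv, haN])
        rw [e1, e2] at hS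
        simp only [phi, sub_zero, add_zero, zero_sub, neg_zero, zero_add]
        show -X (⟨(b:ℕ), by omega⟩ : Fin (N + 2*m + 1)) ⟨(a:ℕ), by omega⟩ = X a b
        have e3 : X (⟨(b:ℕ), by omega⟩ : Fin (N + 2*m + 1)) ⟨(a:ℕ), by omega⟩ = X b a := by
          congr 1 <;> exact Fin.ext (by simp)
        rw [e3]
        linear_combination -hS
    · -- B block
      rw [dif_neg (show ¬((a:ℕ) < (b:ℕ) ∧ (b:ℕ) < N) from by omega),
        dif_neg (show ¬((b:ℕ) < (a:ℕ) ∧ (a:ℕ) < N) from by omega)]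
      by_cases hbL : (b:ℕ) = N + 2*m
      · rw [dif_pos ⟨haN, hbL⟩,
          dif_neg (show ¬((a:ℕ) = N ∧ (b:ℕ) < N) from by omega),
          dif_neg (show ¬(N ≤ (a:ℕ) ∧ (a:ℕ) < (b:ℕ) ∧ ((b:ℕ) - (a:ℕ)) % 2 = 1) from by omega)]
        simp only [phi, sub_zero, add_zero, zero_sub, neg_zero, zero_add]
        show X (⟨(a:ℕ), by omega⟩ : Fin (N + 2*m + 1)) ⟨N + 2*m, by omega⟩ = X a b
        congr 1 <;> exact Fin.ext (by simp; omega)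
      · rw [dif_neg (show ¬((a:ℕ) < N ∧ (b:ℕ) = N + 2*m) from by omega),
          dif_neg (show ¬((a:ℕ) = N ∧ (b:ℕ) < N) from by omega),
          dif_neg (show ¬(N ≤ (a:ℕ) ∧ (a:ℕ) < (b:ℕ) ∧ ((b:ℕ) - (a:ℕ)) % 2 = 1) from by omega)]
        simp only [sub_zero, add_zero, zero_sub, neg_zero, zero_add]
        exact (F1 hcm a b haN (by omega) (by omega)).symm
  · by_cases hbN : (b:ℕ) < N
    · -- C block
      rw [dif_neg (show ¬((a:ℕ) < (b:ℕ) ∧ (b:ℕ) < N) from by omega),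
        dif_neg (show ¬((b:ℕ) < (a:ℕ) ∧ (a:ℕ) < N) from by omega),
        dif_neg (show ¬((a:ℕ) < N ∧ (b:ℕ) = N + 2*m) from by omega)]
      have hF := F2 hso a b
      have e1 : (⟨tauv N m b, tauv_lt N m b.isLt⟩ : Fin (N + 2*m + 1))
          = (⟨(b:ℕ), by omega⟩ : Fin (N + 2*m + 1)) := Fin.ext (by simp [tauv, hbN])
      by_cases haE : (a:ℕ) = N
      · rw [dif_pos ⟨haE, hbN⟩,
          dif_neg (show ¬(N ≤ (a:ℕ) ∧ (a:ℕ) < (b:ℕ) ∧ ((b:ℕ) - (a:ℕ)) % 2 = 1) from by omega)]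
        simp only [phi, sub_zero, add_zero, zero_sub, neg_zero, zero_add]
        rw [hF, e1]
        have e2 : (⟨tauv N m a, tauv_lt N m a.isLt⟩ : Fin (N + 2*m + 1))
            = (⟨N + 2*m, by omega⟩ : Fin (N + 2*m + 1)) :=
          Fin.ext (by simp [tauv, haN]; omega)
        rw [e2]
      · rw [dif_neg (show ¬((a:ℕ) = N ∧ (b:ℕ) < N) from by omega),
          dif_neg (show ¬(N ≤ (a:ℕ) ∧ (a:ℕ) < (b:ℕ) ∧ ((b:ℕ) - (a:ℕ)) % 2 = 1) from by omega)]
        simp only [sub_zero, add_zero, zero_sub, neg_zero, zero_add]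
        rw [hF, e1]
        rw [F1 hcm (⟨(b:ℕ), by omega⟩ : Fin (N + 2*m + 1)) ⟨tauv N m a, tauv_lt N m a.isLt⟩
          (by simpa using hbN) (by simp [tauv, haN] <;> omega) (by simp [tauv, haN] <;> omega), neg_zero]
    · -- D block
      rw [dif_neg (show ¬((a:ℕ) < (b:ℕ) ∧ (b:ℕ) < N) from by omega),
        dif_neg (show ¬((b:ℕ) < (a:ℕ) ∧ (a:ℕ) < N) from by omega),
        dif_neg (show ¬((a:ℕ) < N ∧ (b:ℕ) = N + 2*m) from by omega),
        dif_neg (show ¬((a:ℕ) = N ∧ (b:ℕ) < N) from by omega)]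
      simp only [sub_zero, add_zero, zero_sub, neg_zero, zero_add]
      have hX : X a b = dfun N m X ((a:ℕ) - N) ((b:ℕ) - N) := by
        rw [dfun, dif_pos (by omega)]
        congr 1 <;> exact Fin.ext (by simp <;> omega)
      by_cases hC : N ≤ (a:ℕ) ∧ (a:ℕ) < (b:ℕ) ∧ ((b:ℕ) - (a:ℕ)) % 2 = 1
      · rw [dif_pos hC]
        simp only [phi]
        have hd := Dchase hcm ((a:ℕ) - N) ((b:ℕ) - (a:ℕ)) (by omega)
        rw [show (a:ℕ) - N + ((b:ℕ) - (a:ℕ)) = (b:ℕ) - N from by omega] at hd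
        have hY : dfun N m X 0 ((b:ℕ) - (a:ℕ))
            = X (⟨N, by omega⟩ : Fin (N + 2*m + 1))
                ⟨N + (2 * ((((b:ℕ) - (a:ℕ) - 1))/2) + 1), by omega⟩ := by
          rw [dfun, dif_pos (by omega)]
          congr 1 <;> exact Fin.ext (by simp <;> omega)
        have hsgn : (-1 : ℂ) ^ ((b:ℕ) - N - max ((a:ℕ) - N) m)
              * (-1 : ℂ) ^ (2 * ((((b:ℕ) - (a:ℕ) - 1))/2) + 1 - m)
            = eps2 m ((a:ℕ) - N) ((b:ℕ) - (a:ℕ)) := by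
          rw [eps2, ← pow_add]
          exact neg_one_pow_congr (by omega)
        rw [hX, hd]
        show (-1 : ℂ) ^ ((b:ℕ) - N - max ((a:ℕ) - N) m)
            * ((-1 : ℂ) ^ (2 * ((((b:ℕ) - (a:ℕ) - 1))/2) + 1 - m)
              * X (⟨N, by omega⟩ : Fin (N + 2*m + 1))
                  ⟨N + (2 * ((((b:ℕ) - (a:ℕ) - 1))/2) + 1), by omega⟩)
            = eps2 m ((a:ℕ) - N) ((b:ℕ) - (a:ℕ)) * dfun N m X 0 ((b:ℕ) - (a:ℕ))
        rw [← hY, ← mul_assoc, hsgn]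
      · rw [dif_neg hC, hX]
        exact (Dzero hso hcm _ _ (by omega) (by omega) (by omega)).symm

end Derive

lemma phi_psi (N m : ℕ) (c : Idx N m → ℂ) : phi N m (psi N m c) = c := by
  funext p
  rcases p with ⟨⟨x, y⟩, hxy⟩ | i | t
  · have hxy' : (x:ℕ) < (y:ℕ) := hxy
    have hx := x.isLt; have hy := y.isLt
    simp only [phi]
    rw [psi_apply, dif_pos (show ((x:ℕ):ℕ) < ((y:ℕ):ℕ) ∧ ((y:ℕ):ℕ) < N from by simp <;> omega),
      dif_neg (by simp <;> omega), dif_neg (by simp <;> omega), dif_neg (by simp <;> omega),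
      dif_neg (by simp <;> omega)]
    simp only [sub_zero, add_zero, zero_sub, neg_zero, zero_add]
  · have hi := i.isLt
    simp only [phi]
    rw [psi_apply, dif_neg (by simp <;> omega), dif_neg (by simp <;> omega),
      dif_pos (show ((i:ℕ):ℕ) < N ∧ ((N + 2*m : ℕ):ℕ) = N + 2*m from by simp <;> omega),
      dif_neg (by simp <;> omega), dif_neg (by simp <;> omega)]
    simp only [sub_zero, add_zero, zero_sub, neg_zero, zero_add]
  · have ht := t.isLt
    simp only [phi]
    rw [psi_apply, dif_neg (by simp <;> omega), dif_neg (by simp <;> omega),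
      dif_neg (by simp <;> omega), dif_neg (by simp <;> omega),
      dif_pos (by refine ⟨by simp, by simp <;> omega, by simp <;> omega⟩)]
    simp only [sub_zero, add_zero, zero_sub, neg_zero, zero_add]
    show (-1:ℂ)^(2*(t:ℕ)+1-m) * ((-1:ℂ)^((N + (2*(t:ℕ)+1)) - N - max (N - N) m)
        * c (.inr (.inr ⟨((N + (2*(t:ℕ)+1)) - N - 1)/2, by omega⟩))) = c (.inr (.inr t))
    have e1 : (⟨((N + (2*(t:ℕ)+1)) - N - 1)/2, by omega⟩ : Fin m) = t :=
      Fin.ext (by simp)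
    rw [e1, show (N + (2*(t:ℕ)+1)) - N - max (N - N) m = 2*(t:ℕ)+1 - m from by omega,
      ← mul_assoc, ← pow_add, Even.neg_one_pow (Nat.even_iff.mpr (by omega)), one_mul]

lemma card_Idx (N m : ℕ) : Fintype.card (Idx N m) = N * (N - 1) / 2 + N + m := by
  have e1 : IdxA N ≃ (Σ j : Fin N, Fin (j:ℕ)) :=
    { toFun := fun q => ⟨q.1.2, ⟨(q.1.1 : ℕ), q.2⟩⟩
      invFun := fun s => ⟨(⟨(s.2 : ℕ), lt_trans s.2.isLt s.1.isLt⟩, s.1), s.2.isLt⟩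
      left_inv := fun q => rfl
      right_inv := fun s => rfl }
  rw [Fintype.card_sum, Fintype.card_sum, Fintype.card_fin, Fintype.card_fin,
    Fintype.card_congr e1, Fintype.card_sigma]
  simp only [Fintype.card_fin]
  rw [Fin.sum_univ_eq_sum_range (fun i => i) N, Finset.sum_range_id]
  omega

end Stmt11Aux

/-- `e_m` lies in `so(J′)`, and its centralizer inside `so(J′)` has dimension
`N(N−1)/2 + N + m` (reflecting `z ≅ so_N ⊕ V_N ⊕ ℂ^m`). -/
theorem stmt_11 (N m : ℕ) (hN : 3 ≤ N) (hm : 1 ≤ m) :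
    (nilpE N m)ᵀ * Jform N m + Jform N m * nilpE N m = 0 ∧
    Module.finrank ℂ
        ↥(LinearMap.ker (soCond (N + 2 * m + 1) (Jform N m)) ⊓
          LinearMap.ker (commCond (N + 2 * m + 1) (nilpE N m)))
      = N * (N - 1) / 2 + N + m := by
  constructor
  · rw [Stmt11Aux.eJ]
    exact neg_add_cancel _
  · classical
    set Z := (LinearMap.ker (soCond (N + 2 * m + 1) (Jform N m)) ⊓
          LinearMap.ker (commCond (N + 2 * m + 1) (nilpE N m))) with hZ
    have memZ : ∀ Y : Matrix (Fin (N + 2*m + 1)) (Fin (N + 2*m + 1)) ℂ,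
        Y ∈ Z ↔ (Yᵀ * Jform N m + Jform N m * Y = 0 ∧
          Y * nilpE N m - nilpE N m * Y = 0) := by
      intro Y
      rw [hZ, Submodule.mem_inf, LinearMap.mem_ker, LinearMap.mem_ker]
      constructor
      · rintro ⟨h1, h2⟩; exact ⟨h1, h2⟩
      · rintro ⟨h1, h2⟩; exact ⟨h1, h2⟩
    have hpsi_mem : ∀ c, Stmt11Aux.psi N m c ∈ Z := by
      intro c
      rw [Stmt11Aux.psi]
      refine Submodule.add_mem _ (Submodule.add_mem _ ?_ ?_) ?_
      · exact Submodule.sum_mem _ (fun q _ => Submodule.smul_mem _ _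
          ((memZ _).mpr ⟨Stmt11Aux.gA_so N m _ _, Stmt11Aux.gA_comm N m _ _⟩))
      · exact Submodule.sum_mem _ (fun i _ => Submodule.smul_mem _ _
          ((memZ _).mpr ⟨Stmt11Aux.gB_so N m _, Stmt11Aux.gB_comm N m _⟩))
      · exact Submodule.sum_mem _ (fun t _ => Submodule.smul_mem _ _
          ((memZ _).mpr ⟨Stmt11Aux.gD_so N m _, Stmt11Aux.gD_comm N m _⟩))
    let eqv : Z ≃ₗ[ℂ] (Stmt11Aux.Idx N m → ℂ) :=
      { toFun := fun X => Stmt11Aux.phi N m X.1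
        map_add' := by
          intro X Y
          funext p
          rcases p with q | i | t <;>
            simp [Stmt11Aux.phi, Matrix.add_apply, mul_add]
        map_smul' := by
          intro r X
          funext p
          rcases p with q | i | t <;>
            simp [Stmt11Aux.phi, Matrix.smul_apply, smul_eq_mul] <;> ring
        invFun := fun c => ⟨Stmt11Aux.psi N m c, hpsi_mem c⟩
        left_inv := by
          rintro ⟨X, hX⟩
          obtain ⟨h1, h2⟩ := (memZ X).mp hX
          exact Subtype.ext (Stmt11Aux.psi_phi h1 h2)
        right_inv := fun c => Stmt11Aux.phi_psi N m c }
    rw [LinearEquiv.finrank_eq eqv, Module.finrank_pi, Stmt11Aux.card_Idx]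
end

section
/- Let N ≥ 4 and let f ∈ ℂ[a_{ij} : 1 ≤ i < j ≤ N] be a homogeneous polynomial of degree 2 such that f vanishes at every skew-symmetric complex N×N matrix A of rank ≤ 2 (under the substitution a_{ij} ↦ A_{ij}). Then f is a ℂ-linear combination of the Pfaffians Pf_{ijkl} := a_{ij}a_{kl} − a_{ik}a_{jl} + a_{il}a_{jk}, 1 ≤ i < j < k < l ≤ N. -/
open Matrix MvPolynomial Finsupp

namespace Stmt14Aux

variable {N : ℕ}

abbrev V (N : ℕ) := {p : Fin N × Fin N // p.1 < p.2}

noncomputable def pr (v1 v2 : V N) : (V N →₀ ℕ) := Finsupp.single v1 1 + Finsupp.single v2 1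

lemma pr_comm (v1 v2 : V N) : pr v1 v2 = pr v2 v1 := add_comm _ _

lemma toMultiset_pr (v1 v2 : V N) :
    Finsupp.toMultiset (pr v1 v2) = {v1, v2} := by
  simp only [pr, map_add, Finsupp.toMultiset_single, one_nsmul]
  rfl

lemma pr_eq_iff {v1 v2 w1 w2 : V N} :
    pr v1 v2 = pr w1 w2 ↔ (v1 = w1 ∧ v2 = w2) ∨ (v1 = w2 ∧ v2 = w1) := by
  constructor
  · intro h
    have hm : ({v1, v2} : Multiset (V N)) = {w1, w2} := by
      rw [← toMultiset_pr, ← toMultiset_pr, h]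
    rcases Multiset.cons_eq_cons.mp hm with ⟨h1, h2⟩ | ⟨h1, cs, h2, h3⟩
    · exact Or.inl ⟨h1, Multiset.singleton_inj.mp h2⟩
    · have hc := congrArg Multiset.card h2
      simp only [Multiset.card_singleton, Multiset.card_cons] at hc
      have hcs : cs = 0 := Multiset.card_eq_zero.mp (by omega)
      subst hcs
      rw [Multiset.cons_zero] at h2 h3
      exact Or.inr ⟨(Multiset.singleton_inj.mp h3).symm, Multiset.singleton_inj.mp h2⟩
  · rintro (⟨rfl, rfl⟩ | ⟨rfl, rfl⟩)
    · rfl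
    · exact pr_comm _ _

lemma exists_pr {m : V N →₀ ℕ} (hm : Finsupp.degree m = 2) :
    ∃ v1 v2 : V N, m = pr v1 v2 := by
  have hcard : Multiset.card (Finsupp.toMultiset m) = 2 := by
    rw [Finsupp.card_toMultiset]
    exact hm
  obtain ⟨a, b, hab⟩ := Multiset.card_eq_two.mp hcard
  refine ⟨a, b, ?_⟩
  have := congrArg Multiset.toFinsupp hab
  rw [Finsupp.toMultiset_toFinsupp] at this
  rw [this]
  rw [show ({a, b} : Multiset (V N)) = {a} + {b} from rfl]
  rw [map_add, Multiset.toFinsupp_singleton, Multiset.toFinsupp_singleton]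
  rfl

lemma prod_pr (p : V N → ℂ) (v1 v2 : V N) :
    ((pr v1 v2).prod fun v e => p v ^ e) = p v1 * p v2 := by
  rw [pr, Finsupp.prod_add_index' (fun a => pow_zero (p a)) (fun a m n => pow_add (p a) m n)]
  simp [Finsupp.prod_single_index]


lemma extract (g : MvPolynomial (V N) ℂ) (hg : g.IsHomogeneous 2)
    (p : V N → ℂ) (hev : eval p g = 0) (t1 t2 : V N)
    (hs : p t1 * p t2 ≠ 0)
    (h2 : ∀ v1 v2 : V N, pr v1 v2 ≠ pr t1 t2 →
      coeff (pr v1 v2) g * (p v1 * p v2) = 0) :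
    coeff (pr t1 t2) g = 0 := by
  have key : eval p g = coeff (pr t1 t2) g * (p t1 * p t2) := by
    rw [eval_eq]
    have hterm : ∀ d ∈ g.support, (coeff d g * ∏ i ∈ d.support, p i ^ d i)
        = if d = pr t1 t2 then coeff (pr t1 t2) g * (p t1 * p t2) else 0 := by
      intro d hd
      have hdeg : Finsupp.degree d = 2 := by
        rw [Finsupp.degree_eq_weight_one]
        exact hg (MvPolynomial.mem_support_iff.mp hd)
      obtain ⟨v1, v2, rfl⟩ := exists_pr hdeg
      have hprod : (∏ i ∈ (pr v1 v2).support, p i ^ (pr v1 v2) i) = p v1 * p v2 :=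
        prod_pr p v1 v2
      rw [hprod]
      split_ifs with h
      · rw [h]
        rcases pr_eq_iff.mp h with ⟨h1, h2'⟩ | ⟨h1, h2'⟩ <;> rw [h1, h2'] <;> ring
      · exact h2 v1 v2 h
    rw [Finset.sum_congr rfl hterm, Finset.sum_ite_eq' g.support (pr t1 t2)
      (fun _ => coeff (pr t1 t2) g * (p t1 * p t2))]
    by_cases hmem : pr t1 t2 ∈ g.support
    · rw [if_pos hmem]
    · rw [if_neg hmem]
      rw [MvPolynomial.notMem_support_iff.mp hmem]
      ring
  rw [hev] at key
  rcases mul_eq_zero.mp key.symm with h | h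
  · exact h
  · exact absurd h hs

def pfun (u v : Fin N → ℂ) : V N → ℂ :=
  fun q => u q.1.1 * v q.1.2 - u q.1.2 * v q.1.1

lemma pfun_ne {u v : Fin N → ℂ} {q : V N} (h : pfun u v q ≠ 0) :
    (u q.1.1 ≠ 0 ∧ v q.1.2 ≠ 0) ∨ (u q.1.2 ≠ 0 ∧ v q.1.1 ≠ 0) := by
  have hor : u q.1.1 * v q.1.2 ≠ 0 ∨ u q.1.2 * v q.1.1 ≠ 0 := by
    by_contra hc
    push_neg at hc
    exact h (by simp only [pfun, hc.1, hc.2, sub_zero])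
  rcases hor with h' | h'
  · exact Or.inl ⟨left_ne_zero_of_mul h', right_ne_zero_of_mul h'⟩
  · exact Or.inr ⟨left_ne_zero_of_mul h', right_ne_zero_of_mul h'⟩

def matOf (u v : Fin N → ℂ) : Matrix (Fin N) (Fin N) ℂ :=
  Matrix.of fun i j => u i * v j - u j * v i

lemma matOf_skew (u v : Fin N → ℂ) : (matOf u v)ᵀ = -(matOf u v) := by
  ext i j
  simp only [matOf, Matrix.transpose_apply, Matrix.neg_apply, Matrix.of_apply]
  ring

lemma matOf_rank (u v : Fin N → ℂ) : (matOf u v).rank ≤ 2 := by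
  have hfac : matOf u v
      = (Matrix.of fun i (k : Fin 2) => if k = 0 then u i else -(v i))
        * (Matrix.of fun (k : Fin 2) j => if k = 0 then v j else u j) := by
    ext i j
    simp only [matOf, Matrix.mul_apply, Fin.sum_univ_two, Matrix.of_apply]
    norm_num
    ring
  rw [hfac]
  refine (Matrix.rank_mul_le_left _ _).trans ?_
  refine (Matrix.rank_le_card_width _).trans ?_
  simp

lemma pf_vanish (A : Matrix (Fin N) (Fin N) ℂ) (hA : Aᵀ = -A) (h2 : A.rank ≤ 2)
    (i j k l : Fin N) :
    A i j * A k l - A i k * A j l + A i l * A j k = 0 := by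
  have hskew : ∀ a b, A b a = -A a b := by
    intro a b
    have := congrFun (congrFun hA a) b
    simpa [Matrix.transpose_apply, Matrix.neg_apply] using this
  have hdiag : ∀ a, A a a = 0 := by
    intro a
    have := hskew a a
    linear_combination this / 2
  set w : Fin 4 → Fin N := ![i, j, k, l] with hw
  set B : Matrix (Fin 4) (Fin 4) ℂ := A.submatrix w w with hB
  have hrB : B.rank ≤ 2 := by
    have hfac : B = (Matrix.of fun (p : Fin 4) (q : Fin N) => if q = w p then (1:ℂ) else 0)
        * A * (Matrix.of fun (q : Fin N) (p : Fin 4) => if q = w p then (1:ℂ) else 0) := by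
      ext p q
      simp only [hB, Matrix.submatrix_apply, Matrix.mul_apply, Matrix.of_apply,
        ite_mul, one_mul, zero_mul, mul_ite, mul_one, mul_zero]
      simp [Finset.sum_ite_eq']
    rw [hfac]
    exact (Matrix.rank_mul_le_left _ _).trans ((Matrix.rank_mul_le_right _ _).trans h2)
  have hdet : B.det = 0 := by
    by_contra hne
    have hu : IsUnit B := (Matrix.isUnit_iff_isUnit_det B).mpr (isUnit_iff_ne_zero.mpr hne)
    have := Matrix.rank_of_isUnit B hu
    rw [this] at hrB
    simp at hrB
  have hBlit : B = !![0, A i j, A i k, A i l;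
      -(A i j), 0, A j k, A j l;
      -(A i k), -(A j k), 0, A k l;
      -(A i l), -(A j l), -(A k l), 0] := by
    ext p q
    fin_cases p <;> fin_cases q <;>
      simp [hB, hw, Matrix.submatrix_apply, hdiag, hskew i j, hskew i k, hskew i l,
        hskew j k, hskew j l, hskew k l]
  have hdet2 : B.det = (A i j * A k l - A i k * A j l + A i l * A j k) ^ 2 := by
    rw [hBlit]
    simp [Matrix.det_succ_row_zero, Fin.sum_univ_succ, Fin.succAbove]
    ring
  rw [hdet] at hdet2
  exact (pow_eq_zero_iff (two_ne_zero)).mp hdet2.symm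


lemma XX_eq (w1 w2 : V N) :
    (X w1 * X w2 : MvPolynomial (V N) ℂ) = monomial (pr w1 w2) 1 := by
  rw [show (X w1 : MvPolynomial (V N) ℂ) = monomial (Finsupp.single w1 1) 1 from rfl,
    show (X w2 : MvPolynomial (V N) ℂ) = monomial (Finsupp.single w2 1) 1 from rfl,
    MvPolynomial.monomial_mul, one_mul]
  rfl

noncomputable def Pf (i j k l : Fin N) (hij : i < j) (hjk : j < k) (hkl : k < l) :
    MvPolynomial (V N) ℂ :=
  X ⟨(i, j), hij⟩ * X ⟨(k, l), hkl⟩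
    - X ⟨(i, k), hij.trans hjk⟩ * X ⟨(j, l), hjk.trans hkl⟩
    + X ⟨(i, l), (hij.trans hjk).trans hkl⟩ * X ⟨(j, k), hjk⟩

noncomputable def NM (i j k l : Fin N) (hij : i < j) (hjk : j < k) (hkl : k < l) :
    V N →₀ ℕ :=
  pr ⟨(i, l), (hij.trans hjk).trans hkl⟩ ⟨(j, k), hjk⟩

lemma Pf_isHomogeneous (i j k l : Fin N) (hij : i < j) (hjk : j < k) (hkl : k < l) :
    (Pf i j k l hij hjk hkl).IsHomogeneous 2 := by
  have hm : ∀ v w : V N, (X v * X w : MvPolynomial (V N) ℂ).IsHomogeneous 2 := by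
    intro v w
    simpa using (isHomogeneous_X ℂ v).mul (isHomogeneous_X ℂ w)
  exact ((hm _ _).sub (hm _ _)).add (hm _ _)

lemma coeff_NM_Pf (i j k l i' j' k' l' : Fin N)
    (hij : i < j) (hjk : j < k) (hkl : k < l)
    (h1 : i' < j') (h2 : j' < k') (h3 : k' < l') :
    coeff (NM i j k l hij hjk hkl) (Pf i' j' k' l' h1 h2 h3)
      = if (i', j', k', l') = (i, j, k, l) then 1 else 0 := by
  have nij := hij; rw [Fin.lt_def] at nij
  have njk := hjk; rw [Fin.lt_def] at njk
  have nkl := hkl; rw [Fin.lt_def] at nkl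
  have n1 := h1; rw [Fin.lt_def] at n1
  have n2 := h2; rw [Fin.lt_def] at n2
  have n3 := h3; rw [Fin.lt_def] at n3
  rw [Pf, coeff_add, coeff_sub, XX_eq, XX_eq, XX_eq,
    MvPolynomial.coeff_monomial, MvPolynomial.coeff_monomial, MvPolynomial.coeff_monomial]
  have hc1 : ¬ (pr ⟨(i', j'), h1⟩ ⟨(k', l'), h3⟩ = NM i j k l hij hjk hkl) := by
    intro h
    rcases pr_eq_iff.mp h with ⟨ha, hb⟩ | ⟨ha, hb⟩ <;>
      (simp only [Subtype.mk.injEq, Prod.mk.injEq, Fin.ext_iff] at ha hb; omega)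
  have hc2 : ¬ (pr ⟨(i', k'), h1.trans h2⟩ ⟨(j', l'), h2.trans h3⟩
      = NM i j k l hij hjk hkl) := by
    intro h
    rcases pr_eq_iff.mp h with ⟨ha, hb⟩ | ⟨ha, hb⟩ <;>
      (simp only [Subtype.mk.injEq, Prod.mk.injEq, Fin.ext_iff] at ha hb; omega)
  rw [if_neg hc1, if_neg hc2]
  by_cases h : (i', j', k', l') = (i, j, k, l)
  · obtain ⟨e1, e2, e3, e4⟩ : i' = i ∧ j' = j ∧ k' = k ∧ l' = l := by
      simpa [Prod.ext_iff] using h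
    subst e1; subst e2; subst e3; subst e4
    rw [if_pos h, if_pos ?_]
    · norm_num
    · rfl
  · rw [if_neg h, if_neg ?_]
    · norm_num
    · intro hq
      rcases pr_eq_iff.mp hq with ⟨ha, hb⟩ | ⟨ha, hb⟩ <;>
        simp only [Subtype.mk.injEq, Prod.mk.injEq, Fin.ext_iff] at ha hb
      · exact h (by
          simp only [Prod.mk.injEq, Fin.ext_iff]
          exact ⟨ha.1, hb.1, hb.2, ha.2⟩)
      · omega


def chi (a : Fin N) : Fin N → ℂ := fun i => if i = a then 1 else 0

def chi2 (a b : Fin N) : Fin N → ℂ := fun i => chi a i + chi b i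

lemma chi_ne {a i : Fin N} (h : chi a i ≠ 0) : i = a := by
  by_contra hc
  exact h (by simp [chi, hc])

lemma chi2_ne {a b i : Fin N} (h : chi2 a b i ≠ 0) : i = a ∨ i = b := by
  by_contra hc
  push_neg at hc
  exact h (by simp [chi2, chi, hc.1, hc.2])

abbrev T (N : ℕ) :=
  {q : Fin N × Fin N × Fin N × Fin N //
    q.1 < q.2.1 ∧ q.2.1 < q.2.2.1 ∧ q.2.2.1 < q.2.2.2}

noncomputable def PfT (t : T N) : MvPolynomial (V N) ℂ :=
  Pf t.1.1 t.1.2.1 t.1.2.2.1 t.1.2.2.2 t.2.1 t.2.2.1 t.2.2.2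

noncomputable def NMT (t : T N) : V N →₀ ℕ :=
  NM t.1.1 t.1.2.1 t.1.2.2.1 t.1.2.2.2 t.2.1 t.2.2.1 t.2.2.2

lemma coeff_NMT_PfT (t t' : T N) :
    coeff (NMT t) (PfT t') = if t' = t then 1 else 0 := by
  rcases t with ⟨⟨i, j, k, l⟩, hij, hjk, hkl⟩
  rcases t' with ⟨⟨i', j', k', l'⟩, h1, h2, h3⟩
  rw [NMT, PfT, coeff_NM_Pf]
  simp [Subtype.mk.injEq, Prod.mk.injEq, and_assoc]


lemma Vext {i j a b : Fin N} (hij : i < j) (hab : a < b) (h1 : i = a) (h2 : j = b) :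
    (⟨(i, j), hij⟩ : V N) = ⟨(a, b), hab⟩ := by
  subst h1; subst h2; rfl

lemma classify (g : MvPolynomial (V N) ℂ)
    (Z0 : ∀ v : V N, coeff (pr v v) g = 0)
    (Z1 : ∀ (a b d : Fin N) (hab : a < b) (had : a < d), b < d →
      coeff (pr ⟨(a, b), hab⟩ ⟨(a, d), had⟩) g = 0)
    (Z2 : ∀ (a c b : Fin N) (hab : a < b) (hcb : c < b), a < c →
      coeff (pr ⟨(a, b), hab⟩ ⟨(c, b), hcb⟩) g = 0)
    (Z3 : ∀ (a b d : Fin N) (hab : a < b) (hbd : b < d),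
      coeff (pr ⟨(a, b), hab⟩ ⟨(b, d), hbd⟩) g = 0)
    (Z4 : ∀ (i j k l : Fin N) (hij : i < j) (hjk : j < k) (hkl : k < l),
      coeff (pr ⟨(i, l), (hij.trans hjk).trans hkl⟩ ⟨(j, k), hjk⟩) g = 0)
    (Z5 : ∀ (a b c d : Fin N) (hab : a < b) (hbc : b < c) (hcd : c < d),
      coeff (pr ⟨(a, b), hab⟩ ⟨(c, d), hcd⟩) g = 0)
    (Z6 : ∀ (a b c d : Fin N) (hab : a < b) (hbc : b < c) (hcd : c < d),
      coeff (pr ⟨(a, c), hab.trans hbc⟩ ⟨(b, d), hbc.trans hcd⟩) g = 0)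
    (v1 v2 : V N) : coeff (pr v1 v2) g = 0 := by
  rcases v1 with ⟨⟨i, j⟩, hij⟩
  rcases v2 with ⟨⟨k, l⟩, hkl⟩
  rcases lt_trichotomy i k with hik | rfl | hki
  · rcases lt_trichotomy j k with hjk | rfl | hkj
    · exact Z5 _ _ _ _ hij hjk hkl
    · exact Z3 _ _ _ hij hkl
    · rcases lt_trichotomy j l with hjl | rfl | hlj
      · exact Z6 _ _ _ _ hik hkj hjl
      · exact Z2 _ _ _ hij hkl hik
      · exact Z4 _ _ _ _ hik hkl hlj
  · rcases lt_trichotomy j l with hjl | rfl | hlj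
    · exact Z1 _ _ _ hij hkl hjl
    · exact Z0 _
    · rw [pr_comm]; exact Z1 _ _ _ hkl hij hlj
  · rcases lt_trichotomy l i with hli | rfl | hil
    · rw [pr_comm]; exact Z5 _ _ _ _ hkl hli hij
    · rw [pr_comm]; exact Z3 _ _ _ hkl hij
    · rcases lt_trichotomy l j with hlj | rfl | hjl
      · rw [pr_comm]; exact Z6 _ _ _ _ hki hil hlj
      · rw [pr_comm]; exact Z2 _ _ _ hkl hij hki
      · rw [pr_comm]; exact Z4 _ _ _ _ hki hij hjl

end Stmt14Aux

open Stmt14Aux in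
/-- A degree-2 homogeneous polynomial in the variables `a_{ij}` (`i < j`) vanishing on all
skew-symmetric `N × N` complex matrices of rank `≤ 2` is a linear combination of the
sub-Pfaffians `Pf_{ijkl} = a_{ij}a_{kl} − a_{ik}a_{jl} + a_{il}a_{jk}`. -/
theorem stmt_14 (N : ℕ) (hN : 4 ≤ N)
    (f : MvPolynomial {p : Fin N × Fin N // p.1 < p.2} ℂ)
    (hf : f.IsHomogeneous 2)
    (hvan : ∀ A : Matrix (Fin N) (Fin N) ℂ, Aᵀ = -A → A.rank ≤ 2 →
      MvPolynomial.eval (fun p => A p.1.1 p.1.2) f = 0) :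
    f ∈ Submodule.span ℂ
      {g : MvPolynomial {p : Fin N × Fin N // p.1 < p.2} ℂ |
        ∃ (i j k l : Fin N) (hij : i < j) (hjk : j < k) (hkl : k < l),
          g = MvPolynomial.X ⟨(i, j), hij⟩ * MvPolynomial.X ⟨(k, l), hkl⟩
            - MvPolynomial.X ⟨(i, k), hij.trans hjk⟩
                * MvPolynomial.X ⟨(j, l), hjk.trans hkl⟩
            + MvPolynomial.X ⟨(i, l), (hij.trans hjk).trans hkl⟩
                * MvPolynomial.X ⟨(j, k), hjk⟩} := by
  classical
  set g : MvPolynomial (V N) ℂ :=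
    f - ∑ t : T N, coeff (NMT t) f • PfT t with hgdef
  have hPf_mem : ∀ t : T N, PfT t ∈ Submodule.span ℂ
      {g : MvPolynomial {p : Fin N × Fin N // p.1 < p.2} ℂ |
        ∃ (i j k l : Fin N) (hij : i < j) (hjk : j < k) (hkl : k < l),
          g = MvPolynomial.X ⟨(i, j), hij⟩ * MvPolynomial.X ⟨(k, l), hkl⟩
            - MvPolynomial.X ⟨(i, k), hij.trans hjk⟩
                * MvPolynomial.X ⟨(j, l), hjk.trans hkl⟩
            + MvPolynomial.X ⟨(i, l), (hij.trans hjk).trans hkl⟩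
                * MvPolynomial.X ⟨(j, k), hjk⟩} := by
    rintro ⟨⟨i, j, k, l⟩, hij, hjk, hkl⟩
    exact Submodule.subset_span ⟨i, j, k, l, hij, hjk, hkl, rfl⟩
  suffices hg0 : g = 0 by
    have hf_eq : f = ∑ t : T N, coeff (NMT t) f • PfT t := by
      have := sub_eq_zero.mp (hgdef ▸ hg0)
      exact this
    rw [hf_eq]
    exact Submodule.sum_mem _ fun t _ => Submodule.smul_mem _ _ (hPf_mem t)
  have hg : g.IsHomogeneous 2 := by
    rw [hgdef]
    have hsum : (∑ t : T N, coeff (NMT t) f • PfT t)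
        ∈ homogeneousSubmodule (V N) ℂ 2 :=
      Submodule.sum_mem _ fun t _ => Submodule.smul_mem _ _
        (by rcases t with ⟨⟨i, j, k, l⟩, hij, hjk, hkl⟩
            exact Pf_isHomogeneous i j k l hij hjk hkl)
    exact hf.sub hsum
  have hvg : ∀ uu vv : Fin N → ℂ, eval (pfun uu vv) g = 0 := by
    intro uu vv
    have hskew := matOf_skew uu vv
    have hrank := matOf_rank uu vv
    have hf0 : eval (pfun uu vv) f = 0 := hvan (matOf uu vv) hskew hrank
    have hPf0 : ∀ t : T N, eval (pfun uu vv) (PfT t) = 0 := by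
      rintro ⟨⟨i, j, k, l⟩, hij, hjk, hkl⟩
      have hv := pf_vanish (matOf uu vv) hskew hrank i j k l
      simp only [PfT, Pf, map_add, map_sub, _root_.map_mul, eval_X]
      exact hv
    rw [hgdef, map_sub, map_sum, hf0]
    simp [MvPolynomial.smul_eval, hPf0]
  have Z4 : ∀ (i j k l : Fin N) (hij : i < j) (hjk : j < k) (hkl : k < l),
      coeff (pr ⟨(i, l), (hij.trans hjk).trans hkl⟩ ⟨(j, k), hjk⟩) g = 0 := by
    intro i j k l hij hjk hkl
    have key : coeff (NMT ⟨(i, j, k, l), hij, hjk, hkl⟩) g = 0 := by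
      rw [hgdef, coeff_sub, MvPolynomial.coeff_sum]
      simp only [MvPolynomial.coeff_smul, coeff_NMT_PfT, smul_eq_mul,
        mul_ite, mul_one, mul_zero, Finset.sum_ite_eq', Finset.mem_univ, if_true]
      exact sub_self _
    exact key

  -- Stage 0: squares
  have Z0 : ∀ v : V N, coeff (pr v v) g = 0 := by
    rintro ⟨⟨a, b⟩, hab⟩
    have e1 : pfun (chi a) (chi b) ⟨(a, b), hab⟩ = 1 := by
      simp [pfun, chi, hab.ne, hab.ne']
    refine extract g hg (pfun (chi a) (chi b)) (hvg _ _) _ _ (by rw [e1]; norm_num) ?_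
    rintro ⟨⟨i, j⟩, hij⟩ ⟨⟨k, l⟩, hkl⟩ hne
    by_cases h1 : pfun (chi a) (chi b) ⟨(i, j), hij⟩ = 0
    · rw [h1]; ring
    by_cases h2 : pfun (chi a) (chi b) ⟨(k, l), hkl⟩ = 0
    · rw [h2]; ring
    exfalso
    have dec : ∀ (x y : Fin N) (hxy : x < y),
        pfun (chi a) (chi b) ⟨(x, y), hxy⟩ ≠ 0 → x = a ∧ y = b := by
      intro x y hxy hne0
      rcases pfun_ne hne0 with ⟨hu, hv⟩ | ⟨hu, hv⟩
      · exact ⟨chi_ne hu, chi_ne hv⟩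
      · have h1' : y = a := chi_ne hu
        have h2' : x = b := chi_ne hv
        rw [h2', h1'] at hxy
        exact absurd hxy (asymm hab)
    obtain ⟨hia, hjb⟩ := dec i j hij h1
    obtain ⟨hka, hlb⟩ := dec k l hkl h2
    have E1 : (⟨(i, j), hij⟩ : V N) = ⟨(a, b), hab⟩ := Vext hij hab hia hjb
    have E2 : (⟨(k, l), hkl⟩ : V N) = ⟨(a, b), hab⟩ := Vext hkl hab hka hlb
    rw [E1, E2] at hne
    exact hne rfl
  -- Stage 1: shared first index
  have Z1 : ∀ (a b d : Fin N) (hab : a < b) (had : a < d) (hbd : b < d),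
      coeff (pr ⟨(a, b), hab⟩ ⟨(a, d), had⟩) g = 0 := by
    intro a b d hab had hbd
    have e1 : pfun (chi a) (chi2 b d) ⟨(a, b), hab⟩ = 1 := by
      simp [pfun, chi, chi2, hab.ne, hab.ne', had.ne, had.ne', hbd.ne, hbd.ne']
    have e2 : pfun (chi a) (chi2 b d) ⟨(a, d), had⟩ = 1 := by
      simp [pfun, chi, chi2, hab.ne, hab.ne', had.ne, had.ne', hbd.ne, hbd.ne']
    refine extract g hg (pfun (chi a) (chi2 b d)) (hvg _ _) _ _
      (by rw [e1, e2]; norm_num) ?_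
    rintro ⟨⟨i, j⟩, hij⟩ ⟨⟨k, l⟩, hkl⟩ hne
    by_cases h1 : pfun (chi a) (chi2 b d) ⟨(i, j), hij⟩ = 0
    · rw [h1]; ring
    by_cases h2 : pfun (chi a) (chi2 b d) ⟨(k, l), hkl⟩ = 0
    · rw [h2]; ring
    have dec : ∀ (x y : Fin N) (hxy : x < y),
        pfun (chi a) (chi2 b d) ⟨(x, y), hxy⟩ ≠ 0 →
          (x = a ∧ y = b) ∨ (x = a ∧ y = d) := by
      intro x y hxy hne0
      rcases pfun_ne hne0 with ⟨hu, hv⟩ | ⟨hu, hv⟩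
      · rcases chi2_ne hv with hyb | hyd
        · exact Or.inl ⟨chi_ne hu, hyb⟩
        · exact Or.inr ⟨chi_ne hu, hyd⟩
      · have hy : y = a := chi_ne hu
        rcases chi2_ne hv with hxb | hxd
        · have hxb' : x = b := hxb
          rw [hxb', hy] at hxy; exact absurd hxy (asymm hab)
        · have hxd' : x = d := hxd
          rw [hxd', hy] at hxy; exact absurd hxy (asymm had)
    rcases dec i j hij h1 with ⟨hia, hjb⟩ | ⟨hia, hjd⟩ <;>
      rcases dec k l hkl h2 with ⟨hka, hlb⟩ | ⟨hka, hld⟩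
    · rw [Vext hij hab hia hjb, Vext hkl hab hka hlb]
      exact mul_eq_zero_of_left (Z0 _) _
    · rw [Vext hij hab hia hjb, Vext hkl had hka hld] at hne
      exact absurd rfl hne
    · rw [Vext hij had hia hjd, Vext hkl hab hka hlb] at hne
      exact absurd (pr_comm _ _) hne
    · rw [Vext hij had hia hjd, Vext hkl had hka hld]
      exact mul_eq_zero_of_left (Z0 _) _

  -- Stage 2: shared second index
  have Z2 : ∀ (a c b : Fin N) (hab : a < b) (hcb : c < b), a < c →
      coeff (pr ⟨(a, b), hab⟩ ⟨(c, b), hcb⟩) g = 0 := by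
    intro a c b hab hcb hac
    have e1 : pfun (chi2 a c) (chi b) ⟨(a, b), hab⟩ = 1 := by
      simp [pfun, chi, chi2, hab.ne, hab.ne', hcb.ne, hcb.ne', hac.ne, hac.ne']
    have e2 : pfun (chi2 a c) (chi b) ⟨(c, b), hcb⟩ = 1 := by
      simp [pfun, chi, chi2, hab.ne, hab.ne', hcb.ne, hcb.ne', hac.ne, hac.ne']
    refine extract g hg (pfun (chi2 a c) (chi b)) (hvg _ _) _ _
      (by rw [e1, e2]; norm_num) ?_
    rintro ⟨⟨i, j⟩, hij⟩ ⟨⟨k, l⟩, hkl⟩ hne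
    by_cases h1 : pfun (chi2 a c) (chi b) ⟨(i, j), hij⟩ = 0
    · rw [h1]; ring
    by_cases h2 : pfun (chi2 a c) (chi b) ⟨(k, l), hkl⟩ = 0
    · rw [h2]; ring
    have dec : ∀ (x y : Fin N) (hxy : x < y),
        pfun (chi2 a c) (chi b) ⟨(x, y), hxy⟩ ≠ 0 →
          (x = a ∧ y = b) ∨ (x = c ∧ y = b) := by
      intro x y hxy hne0
      rcases pfun_ne hne0 with ⟨hu, hv⟩ | ⟨hu, hv⟩
      · rcases chi2_ne hu with hxa | hxc
        · exact Or.inl ⟨hxa, chi_ne hv⟩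
        · exact Or.inr ⟨hxc, chi_ne hv⟩
      · have hx : x = b := chi_ne hv
        rcases chi2_ne hu with hya | hyc
        · have hya' : y = a := hya
          rw [hx, hya'] at hxy; exact absurd hxy (asymm hab)
        · have hyc' : y = c := hyc
          rw [hx, hyc'] at hxy; exact absurd hxy (asymm hcb)
    rcases dec i j hij h1 with ⟨hia, hjb⟩ | ⟨hic, hjb⟩ <;>
      rcases dec k l hkl h2 with ⟨hka, hlb⟩ | ⟨hkc, hlb⟩
    · rw [Vext hij hab hia hjb, Vext hkl hab hka hlb]
      exact mul_eq_zero_of_left (Z0 _) _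
    · rw [Vext hij hab hia hjb, Vext hkl hcb hkc hlb] at hne
      exact absurd rfl hne
    · rw [Vext hij hcb hic hjb, Vext hkl hab hka hlb] at hne
      exact absurd (pr_comm _ _) hne
    · rw [Vext hij hcb hic hjb, Vext hkl hcb hkc hlb]
      exact mul_eq_zero_of_left (Z0 _) _
  -- Stage 3: shared middle index
  have Z3 : ∀ (a b d : Fin N) (hab : a < b) (hbd : b < d),
      coeff (pr ⟨(a, b), hab⟩ ⟨(b, d), hbd⟩) g = 0 := by
    intro a b d hab hbd
    have had : a < d := hab.trans hbd
    have e1 : pfun (chi2 a b) (chi2 b d) ⟨(a, b), hab⟩ = 1 := by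
      simp [pfun, chi, chi2, hab.ne, hab.ne', hbd.ne, hbd.ne', had.ne, had.ne']
    have e2 : pfun (chi2 a b) (chi2 b d) ⟨(b, d), hbd⟩ = 1 := by
      simp [pfun, chi, chi2, hab.ne, hab.ne', hbd.ne, hbd.ne', had.ne, had.ne']
    refine extract g hg (pfun (chi2 a b) (chi2 b d)) (hvg _ _) _ _
      (by rw [e1, e2]; norm_num) ?_
    rintro ⟨⟨i, j⟩, hij⟩ ⟨⟨k, l⟩, hkl⟩ hne
    by_cases h1 : pfun (chi2 a b) (chi2 b d) ⟨(i, j), hij⟩ = 0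
    · rw [h1]; ring
    by_cases h2 : pfun (chi2 a b) (chi2 b d) ⟨(k, l), hkl⟩ = 0
    · rw [h2]; ring
    have dec : ∀ (x y : Fin N) (hxy : x < y),
        pfun (chi2 a b) (chi2 b d) ⟨(x, y), hxy⟩ ≠ 0 →
          (x = a ∧ y = b) ∨ (x = a ∧ y = d) ∨ (x = b ∧ y = d) := by
      intro x y hxy hne0
      rcases pfun_ne hne0 with ⟨hu, hv⟩ | ⟨hu, hv⟩
      · rcases chi2_ne hu with hxa | hxb
        · rcases chi2_ne hv with hyb | hyd
          · exact Or.inl ⟨hxa, hyb⟩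
          · exact Or.inr (Or.inl ⟨hxa, hyd⟩)
        · rcases chi2_ne hv with hyb | hyd
          · have hxb' : x = b := hxb
            have hyb' : y = b := hyb
            rw [hxb', hyb'] at hxy; exact absurd hxy (lt_irrefl _)
          · exact Or.inr (Or.inr ⟨hxb, hyd⟩)
      · rcases chi2_ne hu with hya | hyb
        · rcases chi2_ne hv with hxb | hxd
          · have hxb' : x = b := hxb
            have hya' : y = a := hya
            rw [hxb', hya'] at hxy; exact absurd hxy (asymm hab)
          · have hxd' : x = d := hxd
            have hya' : y = a := hya
            rw [hxd', hya'] at hxy; exact absurd hxy (asymm had)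
        · rcases chi2_ne hv with hxb | hxd
          · have hxb' : x = b := hxb
            have hyb' : y = b := hyb
            rw [hxb', hyb'] at hxy; exact absurd hxy (lt_irrefl _)
          · have hxd' : x = d := hxd
            have hyb' : y = b := hyb
            rw [hxd', hyb'] at hxy; exact absurd hxy (asymm hbd)
    rcases dec i j hij h1 with ⟨hi1, hj1⟩ | ⟨hi1, hj1⟩ | ⟨hi1, hj1⟩ <;>
      rcases dec k l hkl h2 with ⟨hk1, hl1⟩ | ⟨hk1, hl1⟩ | ⟨hk1, hl1⟩
    · rw [Vext hij hab hi1 hj1, Vext hkl hab hk1 hl1]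
      exact mul_eq_zero_of_left (Z0 _) _
    · rw [Vext hij hab hi1 hj1, Vext hkl had hk1 hl1]
      exact mul_eq_zero_of_left (Z1 a b d hab had hbd) _
    · rw [Vext hij hab hi1 hj1, Vext hkl hbd hk1 hl1] at hne
      exact absurd rfl hne
    · rw [Vext hij had hi1 hj1, Vext hkl hab hk1 hl1, pr_comm]
      exact mul_eq_zero_of_left (Z1 a b d hab had hbd) _
    · rw [Vext hij had hi1 hj1, Vext hkl had hk1 hl1]
      exact mul_eq_zero_of_left (Z0 _) _
    · rw [Vext hij had hi1 hj1, Vext hkl hbd hk1 hl1]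
      exact mul_eq_zero_of_left (Z2 a b d had hbd hab) _
    · rw [Vext hij hbd hi1 hj1, Vext hkl hab hk1 hl1] at hne
      exact absurd (pr_comm _ _) hne
    · rw [Vext hij hbd hi1 hj1, Vext hkl had hk1 hl1, pr_comm]
      exact mul_eq_zero_of_left (Z2 a b d had hbd hab) _
    · rw [Vext hij hbd hi1 hj1, Vext hkl hbd hk1 hl1]
      exact mul_eq_zero_of_left (Z0 _) _

  -- Stage 5: disjoint pairs
  have Z5 : ∀ (a b c d : Fin N) (hab : a < b) (hbc : b < c) (hcd : c < d),
      coeff (pr ⟨(a, b), hab⟩ ⟨(c, d), hcd⟩) g = 0 := by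
    intro a b c d hab hbc hcd
    have hac : a < c := hab.trans hbc
    have hbd : b < d := hbc.trans hcd
    have had : a < d := hab.trans hbd
    have e1 : pfun (chi2 a c) (chi2 b d) ⟨(a, b), hab⟩ = 1 := by
      simp [pfun, chi, chi2, hab.ne, hab.ne', hbc.ne, hbc.ne', hcd.ne, hcd.ne',
        hac.ne, hac.ne', hbd.ne, hbd.ne', had.ne, had.ne']
    have e2 : pfun (chi2 a c) (chi2 b d) ⟨(c, d), hcd⟩ = 1 := by
      simp [pfun, chi, chi2, hab.ne, hab.ne', hbc.ne, hbc.ne', hcd.ne, hcd.ne',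
        hac.ne, hac.ne', hbd.ne, hbd.ne', had.ne, had.ne']
    refine extract g hg (pfun (chi2 a c) (chi2 b d)) (hvg _ _) _ _
      (by rw [e1, e2]; norm_num) ?_
    rintro ⟨⟨i, j⟩, hij⟩ ⟨⟨k, l⟩, hkl⟩ hne
    by_cases h1 : pfun (chi2 a c) (chi2 b d) ⟨(i, j), hij⟩ = 0
    · rw [h1]; ring
    by_cases h2 : pfun (chi2 a c) (chi2 b d) ⟨(k, l), hkl⟩ = 0
    · rw [h2]; ring
    have dec : ∀ (x y : Fin N) (hxy : x < y),
        pfun (chi2 a c) (chi2 b d) ⟨(x, y), hxy⟩ ≠ 0 →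
          (x = a ∧ y = b) ∨ (x = a ∧ y = d) ∨ (x = c ∧ y = d) ∨ (x = b ∧ y = c) := by
      intro x y hxy hne0
      rcases pfun_ne hne0 with ⟨hu, hv⟩ | ⟨hu, hv⟩
      · rcases chi2_ne hu with hxa | hxc
        · rcases chi2_ne hv with hyb | hyd
          · exact Or.inl ⟨hxa, hyb⟩
          · exact Or.inr (Or.inl ⟨hxa, hyd⟩)
        · rcases chi2_ne hv with hyb | hyd
          · have hxc' : x = c := hxc
            have hyb' : y = b := hyb
            rw [hxc', hyb'] at hxy; exact absurd hxy (asymm hbc)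
          · exact Or.inr (Or.inr (Or.inl ⟨hxc, hyd⟩))
      · rcases chi2_ne hu with hya | hyc
        · rcases chi2_ne hv with hxb | hxd
          · have hxb' : x = b := hxb
            have hya' : y = a := hya
            rw [hxb', hya'] at hxy; exact absurd hxy (asymm hab)
          · have hxd' : x = d := hxd
            have hya' : y = a := hya
            rw [hxd', hya'] at hxy; exact absurd hxy (asymm had)
        · rcases chi2_ne hv with hxb | hxd
          · exact Or.inr (Or.inr (Or.inr ⟨hxb, hyc⟩))
          · have hxd' : x = d := hxd
            have hyc' : y = c := hyc
            rw [hxd', hyc'] at hxy; exact absurd hxy (asymm hcd)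
    rcases dec i j hij h1 with ⟨hi1, hj1⟩ | ⟨hi1, hj1⟩ | ⟨hi1, hj1⟩ | ⟨hi1, hj1⟩ <;>
      rcases dec k l hkl h2 with ⟨hk1, hl1⟩ | ⟨hk1, hl1⟩ | ⟨hk1, hl1⟩ | ⟨hk1, hl1⟩
    · rw [Vext hij hab hi1 hj1, Vext hkl hab hk1 hl1]
      exact mul_eq_zero_of_left (Z0 _) _
    · rw [Vext hij hab hi1 hj1, Vext hkl had hk1 hl1]
      exact mul_eq_zero_of_left (Z1 a b d hab had hbd) _
    · rw [Vext hij hab hi1 hj1, Vext hkl hcd hk1 hl1] at hne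
      exact absurd rfl hne
    · rw [Vext hij hab hi1 hj1, Vext hkl hbc hk1 hl1]
      exact mul_eq_zero_of_left (Z3 a b c hab hbc) _
    · rw [Vext hij had hi1 hj1, Vext hkl hab hk1 hl1, pr_comm]
      exact mul_eq_zero_of_left (Z1 a b d hab had hbd) _
    · rw [Vext hij had hi1 hj1, Vext hkl had hk1 hl1]
      exact mul_eq_zero_of_left (Z0 _) _
    · rw [Vext hij had hi1 hj1, Vext hkl hcd hk1 hl1]
      exact mul_eq_zero_of_left (Z2 a c d had hcd hac) _
    · rw [Vext hij had hi1 hj1, Vext hkl hbc hk1 hl1]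
      exact mul_eq_zero_of_left (Z4 a b c d hab hbc hcd) _
    · rw [Vext hij hcd hi1 hj1, Vext hkl hab hk1 hl1] at hne
      exact absurd (pr_comm _ _) hne
    · rw [Vext hij hcd hi1 hj1, Vext hkl had hk1 hl1, pr_comm]
      exact mul_eq_zero_of_left (Z2 a c d had hcd hac) _
    · rw [Vext hij hcd hi1 hj1, Vext hkl hcd hk1 hl1]
      exact mul_eq_zero_of_left (Z0 _) _
    · rw [Vext hij hcd hi1 hj1, Vext hkl hbc hk1 hl1, pr_comm]
      exact mul_eq_zero_of_left (Z3 b c d hbc hcd) _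
    · rw [Vext hij hbc hi1 hj1, Vext hkl hab hk1 hl1, pr_comm]
      exact mul_eq_zero_of_left (Z3 a b c hab hbc) _
    · rw [Vext hij hbc hi1 hj1, Vext hkl had hk1 hl1, pr_comm]
      exact mul_eq_zero_of_left (Z4 a b c d hab hbc hcd) _
    · rw [Vext hij hbc hi1 hj1, Vext hkl hcd hk1 hl1]
      exact mul_eq_zero_of_left (Z3 b c d hbc hcd) _
    · rw [Vext hij hbc hi1 hj1, Vext hkl hbc hk1 hl1]
      exact mul_eq_zero_of_left (Z0 _) _

  -- Stage 6: crossing pairs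
  have Z6 : ∀ (a b c d : Fin N) (hab : a < b) (hbc : b < c) (hcd : c < d),
      coeff (pr ⟨(a, c), hab.trans hbc⟩ ⟨(b, d), hbc.trans hcd⟩) g = 0 := by
    intro a b c d hab hbc hcd
    have hac : a < c := hab.trans hbc
    have hbd : b < d := hbc.trans hcd
    have had : a < d := hab.trans hbd
    have e1 : pfun (chi2 a b) (chi2 c d) ⟨(a, c), hac⟩ = 1 := by
      simp [pfun, chi, chi2, hab.ne, hab.ne', hbc.ne, hbc.ne', hcd.ne, hcd.ne',
        hac.ne, hac.ne', hbd.ne, hbd.ne', had.ne, had.ne']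
    have e2 : pfun (chi2 a b) (chi2 c d) ⟨(b, d), hbd⟩ = 1 := by
      simp [pfun, chi, chi2, hab.ne, hab.ne', hbc.ne, hbc.ne', hcd.ne, hcd.ne',
        hac.ne, hac.ne', hbd.ne, hbd.ne', had.ne, had.ne']
    refine extract g hg (pfun (chi2 a b) (chi2 c d)) (hvg _ _) _ _
      (by rw [e1, e2]; norm_num) ?_
    rintro ⟨⟨i, j⟩, hij⟩ ⟨⟨k, l⟩, hkl⟩ hne
    by_cases h1 : pfun (chi2 a b) (chi2 c d) ⟨(i, j), hij⟩ = 0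
    · rw [h1]; ring
    by_cases h2 : pfun (chi2 a b) (chi2 c d) ⟨(k, l), hkl⟩ = 0
    · rw [h2]; ring
    have dec : ∀ (x y : Fin N) (hxy : x < y),
        pfun (chi2 a b) (chi2 c d) ⟨(x, y), hxy⟩ ≠ 0 →
          (x = a ∧ y = c) ∨ (x = a ∧ y = d) ∨ (x = b ∧ y = c) ∨ (x = b ∧ y = d) := by
      intro x y hxy hne0
      rcases pfun_ne hne0 with ⟨hu, hv⟩ | ⟨hu, hv⟩
      · rcases chi2_ne hu with hxa | hxb
        · rcases chi2_ne hv with hyc | hyd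
          · exact Or.inl ⟨hxa, hyc⟩
          · exact Or.inr (Or.inl ⟨hxa, hyd⟩)
        · rcases chi2_ne hv with hyc | hyd
          · exact Or.inr (Or.inr (Or.inl ⟨hxb, hyc⟩))
          · exact Or.inr (Or.inr (Or.inr ⟨hxb, hyd⟩))
      · rcases chi2_ne hu with hya2 | hyb
        · rcases chi2_ne hv with hxc | hxd
          · have hxc' : x = c := hxc
            have hya' : y = a := hya2
            rw [hxc', hya'] at hxy; exact absurd hxy (asymm hac)
          · have hxd' : x = d := hxd
            have hya' : y = a := hya2
            rw [hxd', hya'] at hxy; exact absurd hxy (asymm had)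
        · rcases chi2_ne hv with hxc | hxd
          · have hxc' : x = c := hxc
            have hyb' : y = b := hyb
            rw [hxc', hyb'] at hxy; exact absurd hxy (asymm hbc)
          · have hxd' : x = d := hxd
            have hyb' : y = b := hyb
            rw [hxd', hyb'] at hxy; exact absurd hxy (asymm hbd)
    rcases dec i j hij h1 with ⟨hi1, hj1⟩ | ⟨hi1, hj1⟩ | ⟨hi1, hj1⟩ | ⟨hi1, hj1⟩ <;>
      rcases dec k l hkl h2 with ⟨hk1, hl1⟩ | ⟨hk1, hl1⟩ | ⟨hk1, hl1⟩ | ⟨hk1, hl1⟩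
    · rw [Vext hij hac hi1 hj1, Vext hkl hac hk1 hl1]
      exact mul_eq_zero_of_left (Z0 _) _
    · rw [Vext hij hac hi1 hj1, Vext hkl had hk1 hl1]
      exact mul_eq_zero_of_left (Z1 a c d hac had hcd) _
    · rw [Vext hij hac hi1 hj1, Vext hkl hbc hk1 hl1]
      exact mul_eq_zero_of_left (Z2 a b c hac hbc hab) _
    · rw [Vext hij hac hi1 hj1, Vext hkl hbd hk1 hl1] at hne
      exact absurd rfl hne
    · rw [Vext hij had hi1 hj1, Vext hkl hac hk1 hl1, pr_comm]
      exact mul_eq_zero_of_left (Z1 a c d hac had hcd) _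
    · rw [Vext hij had hi1 hj1, Vext hkl had hk1 hl1]
      exact mul_eq_zero_of_left (Z0 _) _
    · rw [Vext hij had hi1 hj1, Vext hkl hbc hk1 hl1]
      exact mul_eq_zero_of_left (Z4 a b c d hab hbc hcd) _
    · rw [Vext hij had hi1 hj1, Vext hkl hbd hk1 hl1]
      exact mul_eq_zero_of_left (Z2 a b d had hbd hab) _
    · rw [Vext hij hbc hi1 hj1, Vext hkl hac hk1 hl1, pr_comm]
      exact mul_eq_zero_of_left (Z2 a b c hac hbc hab) _
    · rw [Vext hij hbc hi1 hj1, Vext hkl had hk1 hl1, pr_comm]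
      exact mul_eq_zero_of_left (Z4 a b c d hab hbc hcd) _
    · rw [Vext hij hbc hi1 hj1, Vext hkl hbc hk1 hl1]
      exact mul_eq_zero_of_left (Z0 _) _
    · rw [Vext hij hbc hi1 hj1, Vext hkl hbd hk1 hl1]
      exact mul_eq_zero_of_left (Z1 b c d hbc hbd hcd) _
    · rw [Vext hij hbd hi1 hj1, Vext hkl hac hk1 hl1] at hne
      exact absurd (pr_comm _ _) hne
    · rw [Vext hij hbd hi1 hj1, Vext hkl had hk1 hl1, pr_comm]
      exact mul_eq_zero_of_left (Z2 a b d had hbd hab) _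
    · rw [Vext hij hbd hi1 hj1, Vext hkl hbc hk1 hl1, pr_comm]
      exact mul_eq_zero_of_left (Z1 b c d hbc hbd hcd) _
    · rw [Vext hij hbd hi1 hj1, Vext hkl hbd hk1 hl1]
      exact mul_eq_zero_of_left (Z0 _) _
  -- conclusion
  have hall : ∀ m, coeff m g = 0 := by
    intro m
    by_cases hm : coeff m g = 0
    · exact hm
    · have hdeg : Finsupp.degree m = 2 := by
        rw [Finsupp.degree_eq_weight_one]
        exact hg hm
      obtain ⟨v1, v2, rfl⟩ := exists_pr hdeg
      exact classify g Z0 Z1 Z2 Z3 Z4 Z5 Z6 v1 v2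
  exact MvPolynomial.ext _ _ fun m => by rw [hall m, MvPolynomial.coeff_zero]
end
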